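/- arXiv:1906.12073 — 7 statements merged into one kernel-verified Lean document; each statement's English description precedes it below -/
import Mathlib

section
/- Let x ≥ 1 and let P be a collection of 3-element subsets of {0,...,x-1} such that any two triples in P share at most one element and every triple has element-sum at most x-1. Then the number of pairs covered by triples of P is at most x(x-1)/4 - ⌊x/6⌋ (minus an additional 1/2 when x ≡ 2,3 (mod 6), and minus 1 when x ≡ 5 (mod 6)). In particular, |P| ≤ ⌊φ(x)/3⌋ where φ(x) denotes this bound. -/
/-!
Write `d v` for the number of triples through `v`. Triples through `v` meet only in `v`, so their
other two points form a matching on `{w < x - v | w ≠ v}` in which every pair has a point below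
`(x - v) / 2`; this is `d v ≤ degBound x v`. The covered pairs number `3 |P| = ∑ d v`, and
`∑ degBound x v ≤ φ(x)` except for `x ≡ 8 (mod 12)`, where the excess is `1/2`. In that case the sum
condition gives `∑ (3v + 1 - x) d v ≤ 0`, whereas `∑ (3v + 1 - x) degBound x v = (3k+2)(k+1) > 0`
for `x = 12k + 8`, so `d` falls short of `degBound` somewhere and `∑ d v ≤ ∑ degBound x v - 1`.
-/

/-- The bound `φ(x) = x(x-1)/4 - ⌊x/6⌋ - c`, where `c = 1/2` when `x ≡ 2,3 (mod 6)`,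
`c = 1` when `x ≡ 5 (mod 6)`, and `c = 0` otherwise. -/
def phi (x : ℕ) : ℚ :=
  (x * (x - 1) : ℚ) / 4 - ((x / 6 : ℕ) : ℚ) -
    (if x % 6 = 2 ∨ x % 6 = 3 then 1 / 2 else if x % 6 = 5 then 1 else 0)

open Finset

lemma disjoint_erase_erase_of_card_inter_le_one {α : Type*} [DecidableEq α] {s t : Finset α} {a : α}
    (hs : a ∈ s) (ht : a ∈ t) (h : #(s ∩ t) ≤ 1) : Disjoint (s.erase a) (t.erase a) := by
  rw [disjoint_left]
  intro b hbs hbt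
  have hab : #({a, b} : Finset α) = 2 := card_pair (ne_of_mem_erase hbs).symm
  have := card_le_card (insert_subset (mem_inter.2 ⟨hs, ht⟩)
    (singleton_subset_iff.2 (mem_inter.2 ⟨mem_of_mem_erase hbs, mem_of_mem_erase hbt⟩)))
  omega

lemma sum_mul_card_filter_mem {α : Type*} [DecidableEq α] {s : Finset α} {B : Finset (Finset α)}
    (hB : ∀ t ∈ B, t ⊆ s) (f : α → ℕ) :
    ∑ a ∈ s, f a * #{t ∈ B | a ∈ t} = ∑ t ∈ B, ∑ a ∈ t, f a := by
  simp_rw [card_filter, mul_sum, mul_ite, mul_one, mul_zero]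
  rw [sum_comm]
  refine sum_congr rfl fun t ht => ?_
  rw [sum_ite_mem, inter_eq_right.2 (hB t ht)]

lemma card_biUnion_powersetCard_two {α : Type*} [DecidableEq α] {P : Finset (Finset α)}
    (hpack : ∀ T ∈ P, ∀ T' ∈ P, T ≠ T' → #(T ∩ T') ≤ 1) :
    #(P.biUnion (powersetCard 2)) = ∑ T ∈ P, (#T).choose 2 := by
  rw [card_biUnion]
  · simp_rw [card_powersetCard]
  intro T hT T' hT' hne
  rw [Function.onFun, disjoint_left]
  intro p hp hp'
  rw [mem_powersetCard] at hp hp'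
  have := card_le_card (subset_inter hp.1 hp'.1)
  have := hpack T hT T' hT' hne
  omega

lemma filter_powersetCard_exists_subset {α : Type*} [DecidableEq α] {s : Finset α}
    {P : Finset (Finset α)} (hP : ∀ T ∈ P, T ⊆ s) (k : ℕ) :
    (s.powersetCard k).filter (fun p => ∃ T ∈ P, p ⊆ T) = P.biUnion (powersetCard k) := by
  ext p
  simp only [mem_filter, mem_powersetCard, mem_biUnion]
  exact ⟨fun ⟨⟨_, hp⟩, T, hT, hpT⟩ => ⟨T, hT, hpT, hp⟩,
    fun ⟨T, hT, hpT, hp⟩ => ⟨⟨hpT.trans (hP T hT), hp⟩, T, hT, hpT⟩⟩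

/-- `min (#((range (x - v)).erase v) / 2) #((range ((x - v) / 2)).erase v)`, by cases. -/
def degBound (x v : ℕ) : ℕ :=
  if 3 * v + 2 ≤ x then (x - v) / 2 - 1 else if 2 * v + 1 ≤ x then (x - v - 1) / 2 else (x - v) / 2

section Star

variable {x v : ℕ} {T : Finset ℕ}

lemma erase_subset_range_sub (hsum : T.sum id ≤ x - 1) (hv : v ∈ T) :
    T.erase v ⊆ (range (x - v)).erase v := by
  intro a ha
  have hav := ne_of_mem_erase ha
  have : a + v ≤ T.sum id := by
    simpa [sum_pair hav] using sum_le_sum_of_subset (f := id)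
      (insert_subset (mem_of_mem_erase ha) (singleton_subset_iff.2 hv))
  rw [mem_erase, mem_range]
  omega

lemma filter_erase_nonempty (hT : #T = 3) (hsum : T.sum id ≤ x - 1) (hv : v ∈ T) :
    ((T.erase v).filter (fun a => 2 * a + v + 2 ≤ x)).Nonempty := by
  obtain ⟨a, b, hab, hT'⟩ := card_eq_two.1 (by rw [card_erase_of_mem hv, hT] : #(T.erase v) = 2)
  have : v + (a + b) = T.sum id := by rw [← add_sum_erase T id hv, hT', sum_pair hab]; rfl
  rcases lt_or_gt_of_ne hab with h | h
  · exact ⟨a, mem_filter.2 ⟨by simp [hT'], by omega⟩⟩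
  · exact ⟨b, mem_filter.2 ⟨by simp [hT'], by omega⟩⟩

end Star

section Packing

variable {x : ℕ} {P : Finset (Finset ℕ)}

lemma sum_card_filter_mem (hP : ∀ T ∈ P, T ⊆ range x ∧ #T = 3) :
    ∑ v ∈ range x, #{T ∈ P | v ∈ T} = 3 * #P := by
  simpa [sum_congr rfl fun T hT => (hP T hT).2, mul_comm] using
    sum_mul_card_filter_mem (fun T hT => (hP T hT).1) (fun _ => 1)

lemma sum_weight_mul_card_filter_mem_le (hP : ∀ T ∈ P, T ⊆ range x ∧ #T = 3 ∧ T.sum id ≤ x - 1) :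
    ∑ v ∈ range x, (3 * v + 1) * #{T ∈ P | v ∈ T} ≤ x * ∑ v ∈ range x, #{T ∈ P | v ∈ T} := by
  rw [sum_mul_card_filter_mem fun T hT => (hP T hT).1,
    sum_card_filter_mem fun T hT => ⟨(hP T hT).1, (hP T hT).2.1⟩,
    show x * (3 * #P) = ∑ T ∈ P, 3 * x by rw [sum_const, smul_eq_mul]; ring]
  refine sum_le_sum fun T hT => ?_
  obtain ⟨hTx, hT3, hTsum⟩ := hP T hT
  obtain ⟨a, ha⟩ := card_pos.1 (by omega : 0 < #T)
  have := mem_range.1 (hTx ha)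
  rw [sum_add_distrib, ← mul_sum, sum_const, smul_eq_mul, mul_one, hT3]
  change 3 * T.sum id + 3 ≤ 3 * x
  omega

lemma card_filter_mem_le_degBound
    (hP : ∀ T ∈ P, #T = 3 ∧ T.sum id ≤ x - 1)
    (hpack : ∀ T ∈ P, ∀ T' ∈ P, T ≠ T' → #(T ∩ T') ≤ 1) (v : ℕ) :
    #{T ∈ P | v ∈ T} ≤ degBound x v := by
  set star := P.filter (v ∈ ·)
  have hdisj : (star : Set (Finset ℕ)).PairwiseDisjoint (·.erase v) := by
    intro T hT T' hT' hne
    simp only [mem_coe, mem_filter, star] at hT hT'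
    exact disjoint_erase_erase_of_card_inter_le_one hT.2 hT'.2 (hpack T hT.1 T' hT'.1 hne)
  have hpairs : 2 * #star ≤ #((range (x - v)).erase v) := by
    calc 2 * #star = #(star.biUnion (·.erase v)) := by
          rw [card_biUnion hdisj, sum_congr rfl fun T hT => ?_, sum_const, smul_eq_mul, mul_comm]
          rw [mem_filter] at hT
          rw [card_erase_of_mem hT.2, (hP T hT.1).1]
      _ ≤ _ := card_le_card (biUnion_subset.2 fun T hT => by
          rw [mem_filter] at hT
          exact erase_subset_range_sub (hP T hT.1).2 hT.2)
  have hsmall : #star ≤ #((range ((x - v) / 2)).erase v) := by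
    calc #star ≤ #(star.biUnion fun T => (T.erase v).filter (fun a => 2 * a + v + 2 ≤ x)) :=
          card_le_card_biUnion (hdisj.mono fun T => filter_subset _ _) fun T hT => by
            rw [mem_filter] at hT
            exact filter_erase_nonempty (hP T hT.1).1 (hP T hT.1).2 hT.2
      _ ≤ _ := card_le_card (biUnion_subset.2 fun T _ a ha => by
          rw [mem_filter, mem_erase] at ha
          rw [mem_erase, mem_range]
          omega)
  rw [card_erase_eq_ite, card_range] at hpairs hsmall
  simp only [mem_range] at hpairs hsmall
  unfold degBound
  split_ifs at hpairs hsmall ⊢ <;> omega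

end Packing

lemma sum_range_ite_lt {M : Type*} [AddCommMonoid M] (f : ℕ → M) {n x : ℕ} (h : n ≤ x) :
    ∑ v ∈ range x, (if v < n then f v else 0) = ∑ v ∈ range n, f v := by
  rw [← sum_filter]
  congr 1
  ext v
  simp only [mem_filter, mem_range]
  omega

lemma sum_range_sub_add_of_monotone {f : ℕ → ℕ} (hf : Monotone f) {n y : ℕ} (h : n ≤ y) :
    ∑ v ∈ range n, (f (y - v) - f (y - v - 1)) + f (y - n) = f y := by
  induction n with
  | zero => simp
  | succ n ih =>
    have := hf (show y - (n + 1) ≤ y - n by omega)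
    rw [sum_range_succ, ← ih (by omega), show y - n - 1 = y - (n + 1) by omega]
    omega

lemma four_mul_sum_range_succ_div_two (n : ℕ) :
    4 * ∑ u ∈ range n, (u + 1) / 2 + n % 2 = n * n := by
  induction n with
  | zero => simp
  | succ n ih =>
    rw [sum_range_succ, mul_add]
    have : 4 * ((n + 1) / 2) + (n + 1) % 2 = 2 * n + 1 + n % 2 := by omega
    nlinarith

lemma sum_degBound_add_eq_sum_succ_div_two (x : ℕ) :
    ∑ v ∈ range x, degBound x v + (x / 2 - x / 2 / 2) + ((x - 1) / 2 - (x - 1 - (x + 1) / 3) / 2)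
      = ∑ v ∈ range x, (v + 1) / 2 := by
  have hdiv : Monotone (· / 2 : ℕ → ℕ) := fun a b h => Nat.div_le_div_right h
  -- `degBound x v = (x - v - ε) / 2`, where `ε` counts the thresholds `(x + 1) / 3` and
  -- `(x + 1) / 2` above `v`; the corrections telescope.
  have key : ∀ v ∈ range x, degBound x v
      + (if v < (x + 1) / 2 then (x - v) / 2 - (x - v - 1) / 2 else 0)
      + (if v < (x + 1) / 3 then (x - 1 - v) / 2 - (x - 1 - v - 1) / 2 else 0) = (x - v) / 2 := by
    intro v hv
    rw [mem_range] at hv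
    unfold degBound
    split_ifs <;> omega
  have reflect : ∑ v ∈ range x, (x - v) / 2 = ∑ v ∈ range x, (v + 1) / 2 := by
    rw [← sum_range_reflect]
    exact sum_congr rfl fun v hv => by rw [mem_range] at hv; congr 1; omega
  rw [← reflect, ← sum_congr rfl key, sum_add_distrib, sum_add_distrib,
    sum_range_ite_lt _ (by omega : (x + 1) / 2 ≤ x),
    sum_range_ite_lt _ (by omega : (x + 1) / 3 ≤ x)]
  have h1 := sum_range_sub_add_of_monotone hdiv (show (x + 1) / 2 ≤ x by omega)
  have h2 := sum_range_sub_add_of_monotone hdiv (show (x + 1) / 3 ≤ x - 1 by omega)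
  omega

lemma sum_degBound_le_phi (x : ℕ) :
    (∑ v ∈ range x, degBound x v : ℚ) ≤ phi x + if x % 12 = 8 then 1 / 2 else 0 := by
  have h := sum_degBound_add_eq_sum_succ_div_two x
  have h4 := four_mul_sum_range_succ_div_two x
  have key : 12 * ∑ v ∈ range x, degBound x v + 12 * (x / 6) + 3 * x
      + (if x % 6 = 2 ∨ x % 6 = 3 then 6 else if x % 6 = 5 then 12 else 0)
      ≤ 3 * (x * x) + if x % 12 = 8 then 6 else 0 := by
    split_ifs <;> omega -- `x * x` is an atom for `omega`; it cancels against `h4`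
  have hq := (Nat.cast_le (α := ℚ)).2 key
  rw [phi]
  push_cast at hq ⊢
  split_ifs at hq ⊢ <;> linarith

lemma sum_range_two_mul {M : Type*} [AddCommMonoid M] (f : ℕ → M) (n : ℕ) :
    ∑ v ∈ range (2 * n), f v = ∑ j ∈ range n, (f (2 * j) + f (2 * j + 1)) := by
  induction n with
  | zero => simp
  | succ n ih =>
    rw [mul_add, mul_one, sum_range_succ, sum_range_succ, sum_range_succ, ih, add_assoc]

lemma six_mul_sum_range_mul_sub (a b c : ℤ) (n : ℕ) :
    6 * ∑ i ∈ range n, (a * i + b) * (c - i)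
      = 3 * (a * c - b) * n * (n - 1) - a * n * (n - 1) * (2 * n - 1) + 6 * b * c * n := by
  induction n with
  | zero => simp
  | succ n ih => rw [sum_range_succ, mul_add, ih]; push_cast; ring

lemma degBound_twelve_mul_add_eight_two_mul {k j : ℕ} (hj : j < 6 * k + 4) :
    (degBound (12 * k + 8) (2 * j) : ℤ) = 6 * k + 3 - j + if 3 * k + 2 ≤ j then 1 else 0 := by
  unfold degBound; split_ifs <;> omega

lemma degBound_twelve_mul_add_eight_two_mul_add_one {k j : ℕ} (hj : j < 6 * k + 4) :
    (degBound (12 * k + 8) (2 * j + 1) : ℤ) = 6 * k + 3 - j - if j ≤ 2 * k then 1 else 0 := by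
  unfold degBound; split_ifs <;> omega

lemma sum_weight_mul_degBound_twelve_mul_add_eight (k : ℕ) :
    ∑ v ∈ range (12 * k + 8), ((3 * v + 1 : ℤ) - (12 * k + 8 : ℕ)) * degBound (12 * k + 8) v
      = (3 * k + 2) * (k + 1) := by
  set w : ℕ → ℤ := fun v => ((3 * v + 1 : ℤ) - (12 * k + 8 : ℕ)) * degBound (12 * k + 8) v with hw
  -- Summed over pairs `2 j, 2 j + 1`, the summand is a quadratic in `j` on each of the ranges
  -- `j ≤ 2k`, `2k < j ≤ 3k + 1`, `3k + 1 < j` on which `degBound` has a fixed shape.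
  have h1 : ∀ i ∈ range (2 * k + 1), w (2 * i) + w (2 * i + 1)
      = (6 * i + (-12 * k - 7)) * (6 * k + 3 - i) + (6 * i + (-12 * k - 4)) * (6 * k + 2 - i) := by
    intro i hi
    have := mem_range.1 hi
    simp only [hw]
    rw [degBound_twelve_mul_add_eight_two_mul, degBound_twelve_mul_add_eight_two_mul_add_one,
      if_neg, if_pos]
    · push_cast; ring
    all_goals omega
  have h2 : ∀ i ∈ range (k + 1), w (2 * (2 * k + 1 + i)) + w (2 * (2 * k + 1 + i) + 1)
      = (12 * i + 1) * (4 * k + 2 - i) := by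
    intro i hi
    have := mem_range.1 hi
    simp only [hw]
    rw [degBound_twelve_mul_add_eight_two_mul, degBound_twelve_mul_add_eight_two_mul_add_one,
      if_neg, if_neg]
    · push_cast; ring
    all_goals omega
  have h3 : ∀ i ∈ range (3 * k + 2),
      w (2 * (2 * k + 1 + (k + 1) + i)) + w (2 * (2 * k + 1 + (k + 1) + i) + 1)
      = (6 * i + (6 * k + 5)) * (3 * k + 2 - i) + (6 * i + (6 * k + 8)) * (3 * k + 1 - i) := by
    intro i hi
    have := mem_range.1 hi
    simp only [hw]
    rw [degBound_twelve_mul_add_eight_two_mul, degBound_twelve_mul_add_eight_two_mul_add_one,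
      if_pos, if_neg]
    · push_cast; ring
    all_goals omega
  rw [show range (12 * k + 8) = range (2 * ((2 * k + 1) + (k + 1) + (3 * k + 2))) by ring_nf,
    sum_range_two_mul, sum_range_add, sum_range_add, sum_congr rfl h1, sum_congr rfl h2,
    sum_congr rfl h3, sum_add_distrib, sum_add_distrib]
  have e1 := six_mul_sum_range_mul_sub 6 (-12 * k - 7) (6 * k + 3) (2 * k + 1)
  have e2 := six_mul_sum_range_mul_sub 6 (-12 * k - 4) (6 * k + 2) (2 * k + 1)
  have e3 := six_mul_sum_range_mul_sub 12 1 (4 * k + 2) (k + 1)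
  have e4 := six_mul_sum_range_mul_sub 6 (6 * k + 5) (3 * k + 2) (3 * k + 2)
  have e5 := six_mul_sum_range_mul_sub 6 (6 * k + 8) (3 * k + 1) (3 * k + 2)
  push_cast at e1 e2 e3 e4 e5
  linarith

lemma sum_weight_mul_le {x : ℕ} {d m : ℕ → ℕ} (hd : ∀ v ∈ range x, d v ≤ m v)
    (hw : ∑ v ∈ range x, (3 * v + 1) * d v ≤ x * ∑ v ∈ range x, d v) :
    ∑ v ∈ range x, ((3 * v + 1 : ℤ) - x) * m v
      ≤ (2 * x - 2) * (∑ v ∈ range x, (m v : ℤ) - ∑ v ∈ range x, (d v : ℤ)) := by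
  have hw' : ∑ v ∈ range x, ((3 * v + 1 : ℤ) - x) * d v ≤ 0 := by
    have : (∑ v ∈ range x, (3 * v + 1) * d v : ℤ) ≤ x * ∑ v ∈ range x, d v := by exact_mod_cast hw
    simp_rw [sub_mul, sum_sub_distrib, ← mul_sum]
    linarith
  calc ∑ v ∈ range x, ((3 * v + 1 : ℤ) - x) * m v
      = ∑ v ∈ range x, ((3 * v + 1 : ℤ) - x) * d v
        + ∑ v ∈ range x, ((3 * v + 1 : ℤ) - x) * ((m v : ℤ) - d v) := by
        rw [← sum_add_distrib]; congr! 1; ring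
    _ ≤ 0 + ∑ v ∈ range x, (2 * x - 2 : ℤ) * ((m v : ℤ) - d v) :=
        add_le_add hw' (sum_le_sum fun v hv => mul_le_mul_of_nonneg_right
          (by have := mem_range.1 hv; omega) (by have := hd v hv; omega))
    _ = _ := by rw [zero_add, ← mul_sum, sum_sub_distrib]

lemma sum_le_phi_of_le_degBound {x : ℕ} {d : ℕ → ℕ} (hd : ∀ v ∈ range x, d v ≤ degBound x v)
    (hw : ∑ v ∈ range x, (3 * v + 1) * d v ≤ x * ∑ v ∈ range x, d v) :
    (∑ v ∈ range x, d v : ℚ) ≤ phi x := by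
  have hle : (∑ v ∈ range x, d v : ℚ) ≤ ∑ v ∈ range x, (degBound x v : ℚ) := by
    exact_mod_cast sum_le_sum hd
  have hphi := sum_degBound_le_phi x
  by_cases h8 : x % 12 = 8
  · obtain ⟨k, rfl⟩ : ∃ k, x = 12 * k + 8 := ⟨x / 12, by omega⟩
    have hgap :=
      (sum_weight_mul_degBound_twelve_mul_add_eight k).symm.le.trans (sum_weight_mul_le hd hw)
    have hlt : ∑ v ∈ range (12 * k + 8), (d v : ℤ) + 1
        ≤ ∑ v ∈ range (12 * k + 8), (degBound (12 * k + 8) v : ℤ) := by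
      by_contra! h
      push_cast at hgap
      nlinarith
    have hlt' : ∑ v ∈ range (12 * k + 8), (d v : ℚ) + 1
        ≤ ∑ v ∈ range (12 * k + 8), (degBound (12 * k + 8) v : ℚ) := by
      exact_mod_cast hlt
    rw [if_pos h8] at hphi
    linarith
  · rw [if_neg h8] at hphi
    linarith

theorem stmt_2_general (x : ℕ) (P : Finset (Finset ℕ))
    (hP : ∀ T ∈ P, T ⊆ Finset.range x ∧ T.card = 3 ∧ T.sum id ≤ x - 1)
    (hpack : ∀ T ∈ P, ∀ T' ∈ P, T ≠ T' → (T ∩ T').card ≤ 1) :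
    (((((Finset.range x).powersetCard 2).filter
        (fun p => ∃ T ∈ P, p ⊆ T)).card : ℚ) ≤ phi x) ∧
    ((P.card : ℤ) ≤ ⌊phi x / 3⌋) := by
  have hbound := sum_le_phi_of_le_degBound
    (fun v _ => card_filter_mem_le_degBound (fun T hT => (hP T hT).2) hpack v)
    (sum_weight_mul_card_filter_mem_le hP)
  rw [← Nat.cast_sum, sum_card_filter_mem fun T hT => ⟨(hP T hT).1, (hP T hT).2.1⟩] at hbound
  have hpairs : #(P.biUnion (powersetCard 2)) = 3 * #P := by
    rw [card_biUnion_powersetCard_two hpack, sum_congr rfl fun T hT => by rw [(hP T hT).2.1],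
      sum_const, smul_eq_mul, mul_comm]
    rfl
  refine ⟨?_, ?_⟩
  · rw [filter_powersetCard_exists_subset (fun T hT => (hP T hT).1), hpairs]
    exact_mod_cast hbound
  · rw [Int.le_floor]
    push_cast at hbound ⊢
    linarith

/-- If `P` is a `2-(x,3,1)` packing on `{0,…,x-1}` all of whose triples have sum at most
`x-1`, then the number of pairs covered by triples of `P` is at most `φ(x)`, and
`|P| ≤ ⌊φ(x)/3⌋`. -/
theorem stmt_2 (x : ℕ) (hx : 1 ≤ x) (P : Finset (Finset ℕ))
    (hP : ∀ T ∈ P, T ⊆ Finset.range x ∧ T.card = 3 ∧ T.sum id ≤ x - 1)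
    (hpack : ∀ T ∈ P, ∀ T' ∈ P, T ≠ T' → (T ∩ T').card ≤ 1) :
    (((((Finset.range x).powersetCard 2).filter
        (fun p => ∃ T ∈ P, p ⊆ T)).card : ℚ) ≤ phi x) ∧
    ((P.card : ℤ) ≤ ⌊phi x / 3⌋) :=
  stmt_2_general x P hP hpack
end

section
/- Fix σ ∈ Z_v and let B_σ be the family of (t+1)-subsets S of Z_v whose element-sum is congruent to σ modulo v. Then B_σ is a t-(v,t+1,1) packing: every t-subset of Z_v is contained in at most one member of B_σ. -/
theorem Finset.eq_of_card_eq_succ_of_sum_eq {α : Type*} [DecidableEq α] [AddCancelCommMonoid α]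
    {T S₁ S₂ : Finset α} (hTS₁ : T ⊆ S₁) (hTS₂ : T ⊆ S₂)
    (hS₁ : S₁.card = T.card + 1) (hS₂ : S₂.card = T.card + 1) (hsum : S₁.sum id = S₂.sum id) :
    S₁ = S₂ := by
  obtain ⟨x, hxT, rfl⟩ := Finset.exists_eq_insert_iff.mpr ⟨hTS₁, hS₁.symm⟩
  obtain ⟨y, hyT, rfl⟩ := Finset.exists_eq_insert_iff.mpr ⟨hTS₂, hS₂.symm⟩
  rw [Finset.sum_insert hxT, Finset.sum_insert hyT] at hsum
  rw [show x = y from add_right_cancel hsum]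

theorem stmt_7_general (v t : ℕ) (σ : ZMod v)
    (T : Finset (ZMod v)) (hT : T.card = t)
    (S1 S2 : Finset (ZMod v))
    (hS1 : S1.card = t + 1) (hsum1 : S1.sum id = σ) (hTS1 : T ⊆ S1)
    (hS2 : S2.card = t + 1) (hsum2 : S2.sum id = σ) (hTS2 : T ⊆ S2) :
    S1 = S2 := by
  subst hT
  exact Finset.eq_of_card_eq_succ_of_sum_eq hTS1 hTS2 hS1 hS2 (hsum1.trans hsum2.symm)

/-- Fix `σ ∈ Z_v`.  The family `B_σ` of `(t+1)`-subsets of `Z_v` whose element-sum is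
`σ` is a `t`-`(v,t+1,1)` packing: every `t`-subset of `Z_v` lies in at most one member. -/
theorem stmt_7 (v t : ℕ) (hv : 0 < v) (σ : ZMod v)
    (T : Finset (ZMod v)) (hT : T.card = t)
    (S1 S2 : Finset (ZMod v))
    (hS1 : S1.card = t + 1) (hsum1 : S1.sum id = σ) (hTS1 : T ⊆ S1)
    (hS2 : S2.card = t + 1) (hsum2 : S2.sum id = σ) (hTS2 : T ⊆ S2) :
    S1 = S2 :=
  stmt_7_general v t σ T hT S1 S2 hS1 hsum1 hTS1 hS2 hsum2 hTS2
end

section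
/- Suppose gcd(v, t+1) = 1. Then for each σ ∈ Z_v, the number of (t+1)-subsets of Z_v whose element-sum is congruent to σ modulo v equals C(v, t+1)/v. -/
/-! Translating a `k`-subset by `a` shifts its sum by `k • a`. When `k • ·` is surjective (for
`G = ZMod v` and `k = t + 1` this is `gcd(v, t+1) = 1`), translation therefore carries any sum
class bijectively onto any other, so the `|G|` sum classes, which partition the `k`-subsets, all
have `C(|G|, k) / |G|` elements. -/

open Finset

lemma sum_finsetCongr_addRight {G : Type*} [AddCommGroup G] (a : G) (S : Finset G) :
    ((Equiv.addRight a).finsetCongr S).sum id = S.sum id + #S • a := by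
  simp [Equiv.finsetCongr_apply, sum_map, sum_add_distrib]

section SumClass

variable {G : Type*} [AddCommGroup G] [Fintype G] [DecidableEq G]

variable (G) in
/-- The paper's `B_σ`, with `k = t + 1`. -/
def sumClass (k : ℕ) (σ : G) : Finset (Finset G) :=
  (univ.powersetCard k).filter (fun S => S.sum id = σ)

lemma card_sumClass_add_nsmul (k : ℕ) (σ a : G) :
    #(sumClass G k σ) = #(sumClass G k (σ + k • a)) := by
  refine card_equiv (Equiv.addRight a).finsetCongr fun S => ?_
  simp only [sumClass, mem_filter, mem_powersetCard_univ, sum_finsetCongr_addRight]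
  rw [Equiv.finsetCongr_apply, card_map]
  constructor
  · rintro ⟨hcard, hsum⟩
    exact ⟨hcard, by rw [hsum, hcard]⟩
  · rintro ⟨hcard, hsum⟩
    exact ⟨hcard, add_right_cancel (by rwa [hcard] at hsum)⟩

lemma card_sumClass_eq_of_surjective {k : ℕ} (hk : Function.Surjective (k • · : G → G))
    (σ τ : G) : #(sumClass G k σ) = #(sumClass G k τ) := by
  obtain ⟨a, ha⟩ := hk (τ - σ)
  rw [card_sumClass_add_nsmul k σ a, show k • a = τ - σ from ha, add_sub_cancel]

lemma card_sumClass_mul_card_of_surjective {k : ℕ} (hk : Function.Surjective (k • · : G → G))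
    (σ : G) : #(sumClass G k σ) * Fintype.card G = (Fintype.card G).choose k := by
  have hpartition : #(univ.powersetCard k : Finset (Finset G)) = ∑ τ : G, #(sumClass G k τ) :=
    card_eq_sum_card_fiberwise fun S _ => mem_univ (S.sum id)
  rw [card_powersetCard, card_univ,
    sum_congr rfl fun τ _ => card_sumClass_eq_of_surjective hk τ σ, sum_const, card_univ,
    smul_eq_mul] at hpartition
  rw [hpartition, mul_comm]

lemma card_sumClass_of_surjective {k : ℕ} (hk : Function.Surjective (k • · : G → G)) (σ : G) :
    #(sumClass G k σ) = (Fintype.card G).choose k / Fintype.card G := by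
  rw [← card_sumClass_mul_card_of_surjective hk σ, Nat.mul_div_cancel _ Fintype.card_pos]

end SumClass

lemma ZMod.nsmul_surjective_of_coprime {v k : ℕ} (h : Nat.Coprime k v) :
    Function.Surjective (k • · : ZMod v → ZMod v) := by
  have hunit : IsUnit (k : ZMod v) := (ZMod.isUnit_iff_coprime k v).mpr h
  simpa only [nsmul_eq_mul] using (IsUnit.isUnit_iff_mulLeft_bijective.mp hunit).2

/-- If `gcd(v, t+1) = 1` then, for each `σ ∈ Z_v`, the number of `(t+1)`-subsets of
`Z_v` whose element-sum is `σ` equals `C(v, t+1)/v`. -/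
theorem stmt_8 (v t : ℕ) [NeZero v] (hgcd : Nat.gcd v (t + 1) = 1) (σ : ZMod v) :
    (((Finset.univ : Finset (ZMod v)).powersetCard (t + 1)).filter
        (fun S => S.sum id = σ)).card = v.choose (t + 1) / v := by
  have hsurj := ZMod.nsmul_surjective_of_coprime (Nat.coprime_comm.mp hgcd)
  have hcard := card_sumClass_of_surjective hsurj σ
  rwa [ZMod.card] at hcard
end

section
/- Let v = 2s be even with v > 18. Define a family D of 4-subsets of {0,...,2s-1} consisting of (i) all {a,b,c,s+d} with 0 ≤ a < b < c < s, 0 ≤ d < s, and a+b+c+d ≡ 2 (mod s), and (ii) all {s+a,s+b,s+c,d} with 0 ≤ a < b < c < s, 0 ≤ d < s, and a+b+c+d ≡ s−6 (mod s). Then D is a 3-(v,4,1) packing, every block of D has element-sum at least v+2 and at most 3v−6, and D has (v−4)/(v−1) · C(v,3)/C(4,3) blocks. -/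
/-!
Split `{0, …, 2s-1}` into the low half `[0, s)` and the high half `[s, 2s)`. Blocks of the first
kind have one high point and sum `≡ 2`, blocks of the second kind three high points and
sum `≡ s - 6 (mod s)`. Two blocks through a common triple `T` are `T ∪ {x}` and `T ∪ {y}`;
their numbers of high points differ by at most one, so they are of the same kind, hence `x` and
`y` lie in the same half and are congruent mod `s`, so `x = y`. By the packing property a block
is determined by its triple of points in one half, and every triple in `[0, s)` (resp. `[s, 2s)`)
is completed to a block by a unique residue, so `|D| = 2·C(s,3) = (v-4)/(v-1)·C(v,3)/4`.
The sum bounds follow from `3 ≤ a + b + c + d ≤ 4s - 7` and the congruences.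
-/

open Finset

theorem Nat.cast_choose_three {K : Type*} [Field K] [CharZero K] (n : ℕ) :
    (n.choose 3 : K) = n * (n - 1) * (n - 2) / 6 := by
  rw [eq_div_iff (by norm_num)]
  rcases n with _ | _ | _ | n
  · simp
  · simp [Nat.choose]
  · simp
  · have h := Nat.descFactorial_eq_factorial_mul_choose (n + 3) 3
    simp only [Nat.descFactorial_succ, Nat.descFactorial_zero, Nat.factorial] at h
    have h' := congrArg (Nat.cast : ℕ → K) h
    push_cast at h' ⊢
    linear_combination -h'

theorem Finset.exists_lt_lt_and_eq_of_card_eq_three {α : Type*} [LinearOrder α] {A : Finset α}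
    (h : #A = 3) : ∃ a b c, a < b ∧ b < c ∧ A = {a, b, c} := by
  set f := A.orderEmbOfFin h
  refine ⟨f 0, f 1, f 2, f.strictMono (by decide), f.strictMono (by decide), ?_⟩
  calc A = univ.image f := (A.image_orderEmbOfFin_univ h).symm
    _ = {f 0, f 1, f 2} := by ext x; simp [Fin.exists_fin_succ, eq_comm]

def IsTriplePacking {α : Type*} (F : Finset (Finset α)) : Prop :=
  ∀ T : Finset α, #T = 3 → ∀ B₁ ∈ F, ∀ B₂ ∈ F, T ⊆ B₁ → T ⊆ B₂ → B₁ = B₂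

namespace IsTriplePacking

variable {α : Type*} {F : Finset (Finset α)}

theorem subset (hF : IsTriplePacking F) {G : Finset (Finset α)} (hG : G ⊆ F) :
    IsTriplePacking G :=
  fun T hT B₁ h₁ B₂ h₂ => hF T hT B₁ (hG h₁) B₂ (hG h₂)

theorem card_eq_of_mapsTo_of_surjOn (hF : IsTriplePacking F) {𝒯 : Finset (Finset α)}
    (f : Finset α → Finset α) (hf : ∀ B ∈ F, f B ⊆ B) (h𝒯 : ∀ T ∈ 𝒯, #T = 3)
    (hmaps : Set.MapsTo f F 𝒯) (hsurj : Set.SurjOn f F 𝒯) : #F = #𝒯 :=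
  card_nbij f hmaps
    (fun B₁ h₁ B₂ h₂ he => hF _ (h𝒯 _ (hmaps h₁)) B₁ h₁ B₂ h₂ (hf B₁ h₁) (he ▸ hf B₂ h₂))
    hsurj

end IsTriplePacking

def highCount (s : ℕ) (B : Finset ℕ) : ℕ := #{x ∈ B | s ≤ x}

theorem highCount_insert {s x : ℕ} {T : Finset ℕ} (hx : x ∉ T) :
    highCount s (insert x T) = highCount s T + if s ≤ x then 1 else 0 := by
  unfold highCount
  rw [filter_insert]
  split_ifs
  · exact card_insert_of_notMem fun hmem => hx (mem_filter.1 hmem).1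
  · rfl

theorem eq_of_modEq_of_le_iff_le {s x y : ℕ} (hx : x < 2 * s) (hy : y < 2 * s)
    (hle : s ≤ x ↔ s ≤ y) (hmod : x ≡ y [MOD s]) : x = y := by
  unfold Nat.ModEq at hmod
  by_cases hsx : s ≤ x
  · rw [Nat.mod_eq_sub_mod hsx, Nat.mod_eq_sub_mod (hle.1 hsx), Nat.mod_eq_of_lt (by omega),
      Nat.mod_eq_of_lt (by omega)] at hmod
    omega
  · rwa [Nat.mod_eq_of_lt (by omega), Nat.mod_eq_of_lt (by omega)] at hmod

theorem isTriplePacking_of_highCount {s r₁ r₃ : ℕ} {F : Finset (Finset ℕ)}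
    (hF : ∀ B ∈ F, B ⊆ range (2 * s) ∧ #B = 4)
    (hsig : ∀ B ∈ F, (highCount s B = 1 ∧ B.sum id ≡ r₁ [MOD s]) ∨
      (highCount s B = 3 ∧ B.sum id ≡ r₃ [MOD s])) :
    IsTriplePacking F := by
  intro T hT B₁ hB₁ B₂ hB₂ hT₁ hT₂
  obtain ⟨x, hxT, rfl⟩ := exists_eq_insert_iff.2 ⟨hT₁, by rw [hT, (hF _ hB₁).2]⟩
  obtain ⟨y, hyT, rfl⟩ := exists_eq_insert_iff.2 ⟨hT₂, by rw [hT, (hF _ hB₂).2]⟩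
  have hx : x < 2 * s := mem_range.1 ((hF _ hB₁).1 (mem_insert_self x T))
  have hy : y < 2 * s := mem_range.1 ((hF _ hB₂).1 (mem_insert_self y T))
  have hsig₁ := hsig _ hB₁
  have hsig₂ := hsig _ hB₂
  rw [highCount_insert hxT, sum_insert hxT] at hsig₁
  rw [highCount_insert hyT, sum_insert hyT] at hsig₂
  obtain ⟨hc, hm⟩ : ((highCount s T + if s ≤ x then 1 else 0) =
      highCount s T + if s ≤ y then 1 else 0) ∧ x + T.sum id ≡ y + T.sum id [MOD s] := by
    rcases hsig₁ with ⟨hc₁, hm₁⟩ | ⟨hc₁, hm₁⟩ <;> rcases hsig₂ with ⟨hc₂, hm₂⟩ | ⟨hc₂, hm₂⟩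
    · exact ⟨hc₁.trans hc₂.symm, hm₁.trans hm₂.symm⟩
    · split_ifs at hc₁ hc₂ <;> omega
    · split_ifs at hc₁ hc₂ <;> omega
    · exact ⟨hc₁.trans hc₂.symm, hm₁.trans hm₂.symm⟩
  rw [eq_of_modEq_of_le_iff_le hx hy (by split_ifs at hc <;> omega)
    (Nat.ModEq.add_right_cancel' _ hm)]

def modComplement (s r m : ℕ) : ℕ := ((r : ZMod s) - m).val

theorem modComplement_lt {s : ℕ} [NeZero s] (r m : ℕ) : modComplement s r m < s :=
  ZMod.val_lt _

theorem add_modComplement_modEq {s : ℕ} [NeZero s] (r m : ℕ) :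
    m + modComplement s r m ≡ r [MOD s] := by
  rw [← ZMod.natCast_eq_natCast_iff]
  push_cast [modComplement, ZMod.natCast_val, ZMod.cast_id]
  ring

def IsLowBlock (s r : ℕ) (B : Finset ℕ) : Prop :=
  ∃ a b c d, a < b ∧ b < c ∧ c < s ∧ d < s ∧ a + b + c + d ≡ r [MOD s] ∧ B = {a, b, c, s + d}

def IsHighBlock (s r : ℕ) (B : Finset ℕ) : Prop :=
  ∃ a b c d, a < b ∧ b < c ∧ c < s ∧ d < s ∧ a + b + c + d ≡ r [MOD s] ∧
    B = {s + a, s + b, s + c, d}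

namespace IsLowBlock

variable {s r : ℕ} {B : Finset ℕ}

theorem subset_range (h : IsLowBlock s r B) : B ⊆ range (2 * s) := by
  obtain ⟨a, b, c, d, hab, hbc, hcs, hds, -, rfl⟩ := h
  intro x hx
  simp only [mem_insert, mem_singleton] at hx
  rw [mem_range]
  omega

theorem card_eq (h : IsLowBlock s r B) : #B = 4 := by
  obtain ⟨a, b, c, d, hab, hbc, hcs, hds, -, rfl⟩ := h
  rw [card_insert_of_notMem (by simp; omega), card_insert_of_notMem (by simp; omega),
    card_pair (by omega)]

theorem exists_sum_eq (h : IsLowBlock s r B) :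
    ∃ m, m ≡ r [MOD s] ∧ 3 ≤ m ∧ m ≤ 4 * s - 7 ∧ B.sum id = m + s := by
  obtain ⟨a, b, c, d, hab, hbc, hcs, hds, hmod, rfl⟩ := h
  refine ⟨a + b + c + d, hmod, by omega, by omega, ?_⟩
  rw [sum_insert (by simp; omega), sum_insert (by simp; omega), sum_pair (by omega)]
  simp only [id]
  ring

theorem sum_modEq (h : IsLowBlock s r B) : B.sum id ≡ r [MOD s] := by
  obtain ⟨m, hm, -, -, hsum⟩ := h.exists_sum_eq
  rw [hsum]
  exact (Nat.add_modulus_modEq_iff).2 hm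

theorem sum_bounds (h : IsLowBlock s 2 B) :
    2 * s + 2 ≤ B.sum id ∧ B.sum id ≤ 3 * (2 * s) - 6 := by
  obtain ⟨m, hm, h3, hm4, hsum⟩ := h.exists_sum_eq
  have := hm.symm.add_le_of_lt (by omega)
  omega

theorem highCount_eq (h : IsLowBlock s r B) : highCount s B = 1 := by
  obtain ⟨a, b, c, d, hab, hbc, hcs, hds, -, rfl⟩ := h
  rw [highCount, card_eq_one]
  exact ⟨s + d, by ext x; simp; omega⟩

theorem filter_lt_mem_powersetCard (h : IsLowBlock s r B) :
    {x ∈ B | x < s} ∈ powersetCard 3 (range s) := by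
  obtain ⟨a, b, c, d, hab, hbc, hcs, hds, -, rfl⟩ := h
  have hlow : {x ∈ ({a, b, c, s + d} : Finset ℕ) | x < s} = {a, b, c} := by
    ext x; simp; omega
  rw [hlow, mem_powersetCard]
  refine ⟨fun x hx => ?_, card_eq_three.2 ⟨a, b, c, by omega, by omega, by omega, rfl⟩⟩
  simp only [mem_insert, mem_singleton] at hx
  rw [mem_range]
  omega

theorem exists_filter_lt_eq [NeZero s] (r : ℕ) {A : Finset ℕ}
    (hA : A ∈ powersetCard 3 (range s)) : ∃ B, IsLowBlock s r B ∧ {x ∈ B | x < s} = A := by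
  obtain ⟨hAs, hA3⟩ := mem_powersetCard.1 hA
  obtain ⟨a, b, c, hab, hbc, rfl⟩ := exists_lt_lt_and_eq_of_card_eq_three hA3
  have hcs : c < s := mem_range.1 (hAs (by simp))
  have hd := modComplement_lt (s := s) r (a + b + c)
  refine ⟨_, ⟨a, b, c, _, hab, hbc, hcs, hd, add_modComplement_modEq r _, rfl⟩, ?_⟩
  ext x; simp; omega

end IsLowBlock

namespace IsHighBlock

variable {s r : ℕ} {B : Finset ℕ}

theorem subset_range (h : IsHighBlock s r B) : B ⊆ range (2 * s) := by
  obtain ⟨a, b, c, d, hab, hbc, hcs, hds, -, rfl⟩ := h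
  intro x hx
  simp only [mem_insert, mem_singleton] at hx
  rw [mem_range]
  omega

theorem card_eq (h : IsHighBlock s r B) : #B = 4 := by
  obtain ⟨a, b, c, d, hab, hbc, hcs, hds, -, rfl⟩ := h
  rw [card_insert_of_notMem (by simp; omega), card_insert_of_notMem (by simp; omega),
    card_pair (by omega)]

theorem exists_sum_eq (h : IsHighBlock s r B) :
    ∃ m, m ≡ r [MOD s] ∧ m ≤ 4 * s - 7 ∧ B.sum id = m + 3 * s := by
  obtain ⟨a, b, c, d, hab, hbc, hcs, hds, hmod, rfl⟩ := h
  refine ⟨a + b + c + d, hmod, by omega, ?_⟩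
  rw [sum_insert (by simp; omega), sum_insert (by simp; omega), sum_pair (by omega)]
  simp only [id]
  ring

theorem sum_modEq (h : IsHighBlock s r B) : B.sum id ≡ r [MOD s] := by
  obtain ⟨m, hm, -, hsum⟩ := h.exists_sum_eq
  rw [hsum, Nat.ModEq, Nat.add_mul_mod_self_right]
  exact hm

/-- `s - 6 ≡ 3 * s - 6`, and the next value in this residue class already exceeds `4 * s - 7`. -/
theorem sum_bounds (h : IsHighBlock s (s - 6) B) (hs : 6 ≤ s) :
    2 * s + 2 ≤ B.sum id ∧ B.sum id ≤ 3 * (2 * s) - 6 := by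
  obtain ⟨m, hm, hm4, hsum⟩ := h.exists_sum_eq
  have hm' : m ≡ 3 * s - 6 [MOD s] := by
    rw [show 3 * s - 6 = s - 6 + s * 2 by omega]
    exact hm.trans (Nat.add_mul_mod_self_left (s - 6) s 2).symm
  have : m ≤ 3 * s - 6 := by
    by_contra hlt
    have := hm'.symm.add_le_of_lt (by omega)
    omega
  omega

theorem highCount_eq (h : IsHighBlock s r B) : highCount s B = 3 := by
  obtain ⟨a, b, c, d, hab, hbc, hcs, hds, -, rfl⟩ := h
  rw [highCount, card_eq_three]
  exact ⟨s + a, s + b, s + c, by omega, by omega, by omega, by ext x; simp; omega⟩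

theorem filter_le_mem_powersetCard (h : IsHighBlock s r B) :
    {x ∈ B | s ≤ x} ∈ powersetCard 3 (Ico s (2 * s)) := by
  obtain ⟨a, b, c, d, hab, hbc, hcs, hds, -, rfl⟩ := h
  have hhigh : {x ∈ ({s + a, s + b, s + c, d} : Finset ℕ) | s ≤ x} = {s + a, s + b, s + c} := by
    ext x; simp; omega
  rw [hhigh, mem_powersetCard]
  refine ⟨fun x hx => ?_, card_eq_three.2 ⟨_, _, _, by omega, by omega, by omega, rfl⟩⟩
  simp only [mem_insert, mem_singleton] at hx
  rw [mem_Ico]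
  omega

theorem exists_filter_le_eq [NeZero s] (r : ℕ) {A : Finset ℕ}
    (hA : A ∈ powersetCard 3 (Ico s (2 * s))) :
    ∃ B, IsHighBlock s r B ∧ {x ∈ B | s ≤ x} = A := by
  obtain ⟨hAs, hA3⟩ := mem_powersetCard.1 hA
  obtain ⟨a, b, c, hab, hbc, rfl⟩ := exists_lt_lt_and_eq_of_card_eq_three hA3
  have ha := mem_Ico.1 (hAs (by simp : a ∈ _))
  have hc := mem_Ico.1 (hAs (by simp : c ∈ _))
  have hd := modComplement_lt (s := s) r (a - s + (b - s) + (c - s))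
  refine ⟨_, ⟨a - s, b - s, c - s, _, by omega, by omega, by omega, hd,
    add_modComplement_modEq r _, rfl⟩, ?_⟩
  ext x; simp; omega

end IsHighBlock

theorem isTriplePacking_of_isLowBlock_or_isHighBlock {s r₁ r₃ : ℕ} {F : Finset (Finset ℕ)}
    (hF : ∀ B ∈ F, IsLowBlock s r₁ B ∨ IsHighBlock s r₃ B) : IsTriplePacking F := by
  refine isTriplePacking_of_highCount (s := s) (r₁ := r₁) (r₃ := r₃) (fun B hB => ?_) (fun B hB => ?_)
  · rcases hF B hB with h | h
    exacts [⟨h.subset_range, h.card_eq⟩, ⟨h.subset_range, h.card_eq⟩]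
  · rcases hF B hB with h | h
    exacts [Or.inl ⟨h.highCount_eq, h.sum_modEq⟩, Or.inr ⟨h.highCount_eq, h.sum_modEq⟩]

theorem card_eq_two_mul_choose_three {s r₁ r₃ : ℕ} [NeZero s] {D : Finset (Finset ℕ)}
    (hD : ∀ B, B ∈ D ↔ IsLowBlock s r₁ B ∨ IsHighBlock s r₃ B) : #D = 2 * s.choose 3 := by
  have hpack := isTriplePacking_of_isLowBlock_or_isHighBlock fun B hB => (hD B).1 hB
  rw [← card_filter_add_card_filter_not (s := D) (fun B => highCount s B = 1), two_mul]
  congr 1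
  · calc #{B ∈ D | highCount s B = 1} = #(powersetCard 3 (range s)) := by
          refine (hpack.subset (filter_subset _ _)).card_eq_of_mapsTo_of_surjOn
            (fun B => {x ∈ B | x < s}) (fun B _ => filter_subset _ _)
            (fun T hT => (mem_powersetCard.1 hT).2) (fun B hB => ?_) (fun T hT => ?_)
          · obtain ⟨hBD, hB1⟩ := mem_filter.1 hB
            rcases (hD B).1 hBD with h | h
            · exact h.filter_lt_mem_powersetCard
            · exact absurd h.highCount_eq (by omega)
          · obtain ⟨B, hB, rfl⟩ := IsLowBlock.exists_filter_lt_eq r₁ hT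
            exact ⟨B, mem_filter.2 ⟨(hD B).2 (Or.inl hB), hB.highCount_eq⟩, rfl⟩
      _ = s.choose 3 := by rw [card_powersetCard, card_range]
  · calc #{B ∈ D | ¬highCount s B = 1} = #(powersetCard 3 (Ico s (2 * s))) := by
          refine (hpack.subset (filter_subset _ _)).card_eq_of_mapsTo_of_surjOn
            (fun B => {x ∈ B | s ≤ x}) (fun B _ => filter_subset _ _)
            (fun T hT => (mem_powersetCard.1 hT).2) (fun B hB => ?_) (fun T hT => ?_)
          · obtain ⟨hBD, hB1⟩ := mem_filter.1 hB
            rcases (hD B).1 hBD with h | h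
            · exact absurd h.highCount_eq hB1
            · exact h.filter_le_mem_powersetCard
          · obtain ⟨B, hB, rfl⟩ := IsHighBlock.exists_filter_le_eq r₃ hT
            exact ⟨B, mem_filter.2 ⟨(hD B).2 (Or.inr hB), by rw [hB.highCount_eq]; omega⟩, rfl⟩
      _ = s.choose 3 := by rw [card_powersetCard, Nat.card_Ico, two_mul, Nat.add_sub_cancel]

/-- For even `v = 2s > 18`, the family `D` of 4-subsets of `{0,…,2s-1}` consisting of
all `{a,b,c,s+d}` with `0 ≤ a < b < c < s`, `0 ≤ d < s`, `a+b+c+d ≡ 2 (mod s)`, and all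
`{s+a,s+b,s+c,d}` with `0 ≤ a < b < c < s`, `0 ≤ d < s`, `a+b+c+d ≡ s−6 (mod s)`, is a
`3`-`(v,4,1)` packing, every block has element-sum between `v+2` and `3v−6`, and `D` has
`(v−4)/(v−1)·C(v,3)/C(4,3)` blocks. -/
theorem stmt_10 (s v : ℕ) (hv : v = 2 * s) (h18 : 18 < v)
    (D : Finset (Finset ℕ))
    (hD : ∀ B : Finset ℕ, B ∈ D ↔
      ((∃ a b c d : ℕ, a < b ∧ b < c ∧ c < s ∧ d < s ∧
          (a + b + c + d) % s = 2 % s ∧ B = {a, b, c, s + d}) ∨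
       (∃ a b c d : ℕ, a < b ∧ b < c ∧ c < s ∧ d < s ∧
          (a + b + c + d) % s = (s - 6) % s ∧ B = {s + a, s + b, s + c, d}))) :
    (∀ B ∈ D, B ⊆ Finset.range v ∧ B.card = 4) ∧
    (∀ T : Finset ℕ, T.card = 3 → ∀ B1 ∈ D, ∀ B2 ∈ D, T ⊆ B1 → T ⊆ B2 → B1 = B2) ∧
    (∀ B ∈ D, v + 2 ≤ B.sum id ∧ B.sum id ≤ 3 * v - 6) ∧
    ((D.card : ℚ) = ((v : ℚ) - 4) / ((v : ℚ) - 1) * (v.choose 3 : ℚ) / ((4).choose 3 : ℚ)) := by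
  subst hv
  have hs : 10 ≤ s := by omega
  have : NeZero s := ⟨by omega⟩
  change ∀ B, B ∈ D ↔ IsLowBlock s 2 B ∨ IsHighBlock s (s - 6) B at hD
  refine ⟨fun B hB => ?_, isTriplePacking_of_isLowBlock_or_isHighBlock fun B hB => (hD B).1 hB,
    fun B hB => ?_, ?_⟩
  · rcases (hD B).1 hB with h | h
    exacts [⟨h.subset_range, h.card_eq⟩, ⟨h.subset_range, h.card_eq⟩]
  · rcases (hD B).1 hB with h | h
    exacts [h.sum_bounds, h.sum_bounds (by omega)]
  · have hs' : (2 * s : ℚ) - 1 ≠ 0 := by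
      have : (10 : ℚ) ≤ s := by exact_mod_cast hs
      linarith
    rw [card_eq_two_mul_choose_three hD]
    rw [Nat.cast_mul, Nat.cast_choose_three, Nat.cast_choose_three, show Nat.choose 4 3 = 4 by rfl]
    push_cast
    field_simp
    ring
end

section
/- Suppose v ≡ 1 or 3 (mod 6), and suppose that for every prime p dividing v−2, the multiplicative order of −2 modulo p is singly even (i.e., ≡ 2 (mod 4)). Then there exists a Steiner triple system of order v on point set {0,...,v−1} in which every block has element-sum at least v−2 and at most 2v+2; in particular its DiffSum is at most v+4. -/
/-!
Write `v = n + 2` with `n = 2a + 1`, so that `n` is odd and prime to `3`. On `ℤ/n ∪ {∞₀, ∞₁}`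
take as blocks the triples of distinct residues with sum `0`, the triples `{w, -2w, ∞_{χ w}}`
for `w ≠ 0`, and `{0, ∞₀, ∞₁}`. Two distinct residues lie in no zero-sum triple exactly when they
are `w, -2w` for some `w`, and every nonzero residue `x` lies in two such pairs (with `-2x` and
with `x / -2`); so a colouring with `χ (-2w) = !χ w` makes `x` meet each point at infinity exactly
once. Such a colouring exists because every orbit of `x ↦ -2x` on nonzero residues has even
length: if `(-2)^k x = x` with `x ≠ 0`, then `(-2)^k - 1` is not a unit, so `(-2)^k = 1` modulo
some prime `p ∣ n`, and the even order of `-2` modulo `p` divides `k`.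

Label the residue `r` by `r` or `r + 2` according as `r < a` or not, and `∞₀, ∞₁` by `a, a + 1`.
A zero-sum triple has residue sum `n` or `2n`. For `{w, -2w}` the residues satisfy
`r(-2w) + 2 r(w) ∈ {n, 2n}`, which keeps `r(w) + r(-2w)` in `[a + 1, 3a + 1]`. Hence every block
sum lies in `[n, 2n + 6] = [v - 2, 2v + 2]`.
-/

open Finset Sum

theorem Nat.le_and_le_two_mul_of_dvd {n m : ℕ} (h : n ∣ m) (h0 : 0 < m) (h3 : m < 3 * n) :
    n ≤ m ∧ m ≤ 2 * n := by
  obtain ⟨k, rfl⟩ := h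
  have hk : k < 3 := Nat.lt_of_mul_lt_mul_left (a := n) (by linarith)
  have hk0 : 0 < k := Nat.pos_of_mul_pos_left h0
  interval_cases k <;> omega

theorem Equiv.Perm.pow_natAbs_apply_eq_self {α : Type*} {σ : Equiv.Perm α} {x : α} {k : ℤ}
    (h : (σ ^ k) x = x) : (σ ^ k.natAbs) x = x := by
  rcases Int.natAbs_eq k with hk | hk
  · rwa [hk, zpow_natCast] at h
  · rw [hk, zpow_neg, zpow_natCast] at h
    simpa using zpow_apply_eq_self_of_apply_eq_self h (-1)

/-- Choosing a base point `r x` in each cycle, colour `x` by the parity of an exponent `i` with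
`σ ^ i (r x) = x`; this parity is well defined and flips along `σ` on cycles of even length. -/
theorem Equiv.Perm.exists_bool_apply_eq_not {α : Type*} (σ : Equiv.Perm α) :
    ∃ χ : α → Bool, ∀ x, (∀ k : ℕ, (σ ^ k) x = x → Even k) → χ (σ x) = !χ x := by
  let r (x : α) : α := (Quotient.mk (SameCycle.setoid σ) x).out
  have hr (x : α) : σ.SameCycle (r x) x := Quotient.mk_out (s := SameCycle.setoid σ) x
  classical
  refine ⟨fun x => decide (Odd (hr x).choose), fun x hx => ?_⟩
  have hrσ : r (σ x) = r x :=
    congrArg Quotient.out (Quotient.sound (sameCycle_apply_left.2 (SameCycle.refl σ x)))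
  obtain ⟨i, hi⟩ : ∃ i, (hr x).choose = i := ⟨_, rfl⟩
  obtain ⟨j, hj⟩ : ∃ j, (hr (σ x)).choose = j := ⟨_, rfl⟩
  have hxi : (σ ^ i) (r x) = x := hi ▸ (hr x).choose_spec
  have hxj : (σ ^ j) (r x) = σ x := hrσ ▸ hj ▸ (hr (σ x)).choose_spec
  have hfix : (σ ^ (j - i - 1)) x = x := calc
    (σ ^ (j - i - 1)) x = (σ ^ (j - i - 1) * σ ^ i) (r x) := by rw [mul_apply, hxi]
    _ = (σ⁻¹ * σ ^ j) (r x) := by rw [← zpow_neg_one, ← zpow_add, ← zpow_add]; congr 2; ring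
    _ = x := by rw [mul_apply, hxj]; exact σ.symm_apply_apply x
  have heven := Int.natAbs_even.1 (hx _ (pow_natAbs_apply_eq_self hfix))
  rw [Int.even_sub_one, Int.even_sub] at heven
  simp only [hi, hj]
  rw [← decide_not, decide_eq_decide, ← Int.not_even_iff_odd, ← Int.not_even_iff_odd]
  tauto

theorem Units.mulLeft_pow_apply {M : Type*} [Monoid M] (u : Mˣ) (k : ℕ) (x : M) :
    (u.mulLeft ^ k) x = (u : M) ^ k * x := by
  induction k with
  | zero => simp
  | succ k ih => rw [pow_succ', Equiv.Perm.mul_apply, ih, mulLeft_apply, pow_succ', mul_assoc]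

theorem ZMod.exists_prime_dvd_castHom_eq_zero {n : ℕ} [NeZero n] {y : ZMod n}
    (hy : ¬IsUnit y) : ∃ p, p.Prime ∧ ∃ hp : p ∣ n, castHom hp (ZMod p) y = 0 := by
  rw [← natCast_zmod_val y, isUnit_iff_coprime, Nat.Prime.not_coprime_iff_dvd] at hy
  obtain ⟨p, hp, hpy, hpn⟩ := hy
  refine ⟨p, hp, hpn, ?_⟩
  rwa [← natCast_zmod_val y, map_natCast, natCast_eq_zero_iff]

theorem ZMod.even_of_intCast_pow_mul_eq_self {n : ℕ} [NeZero n] {m : ℤ}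
    (hm : ∀ p : ℕ, p.Prime → p ∣ n → Even (orderOf (m : ZMod p)))
    {x : ZMod n} (hx : x ≠ 0) {k : ℕ} (h : (m : ZMod n) ^ k * x = x) : Even k := by
  have hy : ¬IsUnit ((m : ZMod n) ^ k - 1) := fun hu =>
    hx (hu.mul_right_eq_zero.1 (by rw [sub_mul, h, one_mul, sub_self]))
  obtain ⟨p, hp, hpn, hp0⟩ := exists_prime_dvd_castHom_eq_zero hy
  rw [map_sub, map_pow, map_intCast, map_one, sub_eq_zero] at hp0
  exact even_iff_two_dvd.2 ((hm p hp hpn).two_dvd.trans (orderOf_dvd_of_pow_eq_one hp0))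

theorem ZMod.exists_bool_intCast_mul_eq_not {n : ℕ} [NeZero n] {m : ℤ}
    (hu : IsUnit (m : ZMod n)) (hm : ∀ p : ℕ, p.Prime → p ∣ n → Even (orderOf (m : ZMod p))) :
    ∃ χ : ZMod n → Bool, ∀ x, x ≠ 0 → χ (m * x) = !χ x := by
  obtain ⟨χ, hχ⟩ := hu.unit.mulLeft.exists_bool_apply_eq_not
  refine ⟨χ, fun x hx => hχ x fun k hk => ?_⟩
  rw [Units.mulLeft_pow_apply, IsUnit.unit_spec] at hk
  exact even_of_intCast_pow_mul_eq_self hm hx hk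

def IsSteinerTripleSystem {α : Type*} (X : Finset α) (B : Finset (Finset α)) : Prop :=
  (∀ b ∈ B, b ⊆ X ∧ b.card = 3) ∧ ∀ x ∈ X, ∀ y ∈ X, x ≠ y → ∃! b, b ∈ B ∧ x ∈ b ∧ y ∈ b

theorem IsSteinerTripleSystem.map {α β : Type*} [DecidableEq β] {X : Finset α}
    {B : Finset (Finset α)} (h : IsSteinerTripleSystem X B) (e : α ↪ β) :
    IsSteinerTripleSystem (X.map e) (B.image (·.map e)) := by
  refine ⟨?_, ?_⟩
  · simp only [mem_image]
    rintro _ ⟨b, hb, rfl⟩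
    exact ⟨map_subset_map.2 (h.1 b hb).1, by rw [card_map, (h.1 b hb).2]⟩
  · simp only [mem_map]
    rintro _ ⟨x, hx, rfl⟩ _ ⟨y, hy, rfl⟩ hxy
    obtain ⟨b, ⟨hb, hxb, hyb⟩, huniq⟩ := h.2 x hx y hy (ne_of_apply_ne e hxy)
    refine ⟨b.map e, ⟨mem_image_of_mem _ hb, mem_map_of_mem e hxb, mem_map_of_mem e hyb⟩, ?_⟩
    rintro _ ⟨hc', hxc, hyc⟩
    obtain ⟨c, hc, rfl⟩ := mem_image.1 hc'
    rw [huniq c ⟨hc, (mem_map' e).1 hxc, (mem_map' e).1 hyc⟩]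

theorem Finset.triple_eq_of_op_eq_third {P : Type*} [DecidableEq P] {op : P → P → P}
    (hcomm : ∀ x y, op x y = op y x) {p q r : P} (hpq : op p q = r) (hpr : op p r = q)
    (hqr : op q r = p) {x y : P} (hx : x ∈ ({p, q, r} : Finset P))
    (hy : y ∈ ({p, q, r} : Finset P)) (hxy : x ≠ y) : ({p, q, r} : Finset P) = {x, y, op x y} := by
  simp only [mem_insert, mem_singleton] at hx hy
  rcases hx with hx | hx | hx <;> rcases hy with hy | hy | hy <;> subst x y <;>
    simp only [ne_eq, not_true_eq_false] at hxy <;>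
    simp only [hpq, hpr, hqr, hcomm q p, hcomm r p, hcomm r q, insert_comm p, insert_comm r,
      pair_comm]

namespace ZeroSumSteiner

section Construction

variable {R : Type*} [CommRing R] {χ : R → Bool}

theorem eq_zero_of_neg_two_mul_eq_self (h3 : IsUnit (3 : R)) {x : R} (h : -2 * x = x) : x = 0 :=
  h3.mul_right_eq_zero.1 (by linear_combination -h)

variable [DecidableEq R]

/-- The third point of the block through two distinct points; `Ring.inverse (-2) * x` is the
`w` with `-2 * w = x`. -/
noncomputable def thirdPoint (χ : R → Bool) : R ⊕ Bool → R ⊕ Bool → R ⊕ Bool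
  | inl x, inl y =>
    if x = y then inl x
    else if y = -2 * x then inr (χ x)
    else if x = -2 * y then inr (χ y)
    else inl (-(x + y))
  | inl x, inr c | inr c, inl x =>
    if x = 0 then inr !c
    else if χ x = c then inl (-2 * x)
    else inl (Ring.inverse (-2) * x)
  | inr c, inr d => if c = d then inr c else inl 0

theorem thirdPoint_comm (h3 : IsUnit (3 : R)) (p q : R ⊕ Bool) :
    thirdPoint χ p q = thirdPoint χ q p := by
  rcases p with x | c <;> rcases q with y | d
  · simp only [thirdPoint]
    obtain rfl | hxy := eq_or_ne x y
    · simp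
    have : ¬(y = -2 * x ∧ x = -2 * y) := fun ⟨hy, hx⟩ => by
      have hx0 : x = 0 := eq_zero_of_neg_two_mul_eq_self h3 (by linear_combination hx - 2 * hy)
      exact hxy (by rw [hy, hx0, mul_zero])
    split_ifs <;> first | rfl | tauto | (congr 1; ring)
  · rfl
  · rfl
  · simp only [thirdPoint]
    split_ifs <;> simp_all

theorem thirdPoint_inl_inl_of_add_add_eq_zero {x y z : R} (hxy : x ≠ y) (hxz : x ≠ z)
    (hyz : y ≠ z) (h : x + y + z = 0) : thirdPoint χ (inl x) (inl y) = inl z := by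
  have hy : y ≠ -2 * x := fun hy => hxz (by linear_combination -h + hy)
  have hx : x ≠ -2 * y := fun hx => hyz (by linear_combination -h + hx)
  simp only [thirdPoint, if_neg hxy, if_neg hy, if_neg hx, inl.injEq]
  linear_combination -h

theorem thirdPoint_inl_neg_two_mul (h3 : IsUnit (3 : R)) {w : R} (hw : w ≠ 0) :
    thirdPoint χ (inl w) (inl (-2 * w)) = inr (χ w) := by
  have : w ≠ -2 * w := fun h => hw (eq_zero_of_neg_two_mul_eq_self h3 h.symm)
  simp only [thirdPoint, if_neg this, if_true]

theorem thirdPoint_inl_inr_self {w : R} (hw : w ≠ 0) :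
    thirdPoint χ (inl w) (inr (χ w)) = inl (-2 * w) := by
  simp only [thirdPoint, if_neg hw, if_true]

theorem thirdPoint_neg_two_mul_inr (h2 : IsUnit (2 : R))
    (hχ : ∀ x, x ≠ 0 → χ (-2 * x) = !χ x) {w : R} (hw : w ≠ 0) :
    thirdPoint χ (inl (-2 * w)) (inr (χ w)) = inl w := by
  have h0 : -2 * w ≠ 0 := fun h => hw (h2.neg.mul_right_eq_zero.1 h)
  simp only [thirdPoint, if_neg h0, hχ w hw, Bool.not_eq_self, if_false, ← mul_assoc,
    Ring.inverse_mul_cancel _ h2.neg, one_mul]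

theorem thirdPoint_zero_inr (c : Bool) : thirdPoint χ (inl 0) (inr c) = inr !c := by
  simp [thirdPoint]

theorem thirdPoint_inr_not (c : Bool) : thirdPoint χ (inr c) (inr !c) = inl 0 := by
  simp [thirdPoint]

variable (χ) in
inductive IsBlock : Finset (R ⊕ Bool) → Prop
  | zeroSum {x y z : R} : x ≠ y → x ≠ z → y ≠ z → x + y + z = 0 → IsBlock {inl x, inl y, inl z}
  | infinity {w : R} : w ≠ 0 → IsBlock {inl w, inl (-2 * w), inr (χ w)}
  | base : IsBlock {inl 0, inr false, inr true}

theorem IsBlock.card_eq_three (h3 : IsUnit (3 : R)) {b : Finset (R ⊕ Bool)} (hb : IsBlock χ b) :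
    b.card = 3 := by
  rcases hb with ⟨hxy, hxz, hyz, -⟩ | @⟨w, hw⟩ | _ <;> rw [Finset.card_eq_three]
  · exact ⟨_, _, _, inl_injective.ne hxy, inl_injective.ne hxz, inl_injective.ne hyz, rfl⟩
  · have : w ≠ -2 * w := fun h => hw (eq_zero_of_neg_two_mul_eq_self h3 h.symm)
    exact ⟨_, _, _, inl_injective.ne this, inl_ne_inr, inl_ne_inr, rfl⟩
  · exact ⟨_, _, _, inl_ne_inr, inl_ne_inr, by simp, rfl⟩

theorem IsBlock.eq_insert_thirdPoint (h2 : IsUnit (2 : R)) (h3 : IsUnit (3 : R))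
    (hχ : ∀ x, x ≠ 0 → χ (-2 * x) = !χ x) {b : Finset (R ⊕ Bool)} (hb : IsBlock χ b)
    {p q : R ⊕ Bool} (hp : p ∈ b) (hq : q ∈ b) (hpq : p ≠ q) : b = {p, q, thirdPoint χ p q} := by
  rcases hb with ⟨hxy, hxz, hyz, h⟩ | @⟨w, hw⟩ | _ <;>
    refine triple_eq_of_op_eq_third (thirdPoint_comm h3) ?_ ?_ ?_ hp hq hpq
  · exact thirdPoint_inl_inl_of_add_add_eq_zero hxy hxz hyz h
  · exact thirdPoint_inl_inl_of_add_add_eq_zero hxz hxy hyz.symm (by linear_combination h)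
  · exact thirdPoint_inl_inl_of_add_add_eq_zero hyz hxy.symm hxz.symm (by linear_combination h)
  · exact thirdPoint_inl_neg_two_mul h3 hw
  · exact thirdPoint_inl_inr_self hw
  · exact thirdPoint_neg_two_mul_inr h2 hχ hw
  · exact thirdPoint_zero_inr false
  · exact thirdPoint_zero_inr true
  · exact thirdPoint_inr_not false

theorem exists_isBlock_inl_mem_inr_mem (h2 : IsUnit (2 : R))
    (hχ : ∀ x, x ≠ 0 → χ (-2 * x) = !χ x) (x : R) (c : Bool) :
    ∃ b, IsBlock χ b ∧ inl x ∈ b ∧ inr c ∈ b := by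
  by_cases hx : x = 0
  · subst hx
    exact ⟨_, .base, by simp, by cases c <;> simp⟩
  by_cases hc : χ x = c
  · exact ⟨_, .infinity hx, by simp, by simp [hc]⟩
  set w := Ring.inverse (-2) * x
  have hxw : -2 * w = x := by rw [← mul_assoc, Ring.mul_inverse_cancel _ h2.neg, one_mul]
  have hw : w ≠ 0 := by rintro h; rw [h, mul_zero] at hxw; exact hx hxw.symm
  have hcw : χ w = c := by
    have h := hχ w hw
    rw [hxw] at h
    rw [h] at hc
    cases c <;> simpa using hc
  exact ⟨_, .infinity hw, by simp [hxw], by simp [hcw]⟩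

theorem exists_isBlock_mem (h2 : IsUnit (2 : R)) (hχ : ∀ x, x ≠ 0 → χ (-2 * x) = !χ x)
    {p q : R ⊕ Bool} (hpq : p ≠ q) : ∃ b, IsBlock χ b ∧ p ∈ b ∧ q ∈ b := by
  rcases p with x | c <;> rcases q with y | d
  · have hxy : x ≠ y := fun h => hpq (h ▸ rfl)
    by_cases hy : y = -2 * x
    · have hx : x ≠ 0 := by rintro rfl; simp_all
      exact ⟨_, .infinity hx, by simp, by simp [hy]⟩
    by_cases hx : x = -2 * y
    · have hy0 : y ≠ 0 := by rintro rfl; simp_all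
      exact ⟨_, .infinity hy0, by simp [hx], by simp⟩
    refine ⟨_, .zeroSum (z := -(x + y)) hxy ?_ ?_ (by ring), by simp, by simp⟩
    · exact fun h => hy (by linear_combination h)
    · exact fun h => hx (by linear_combination h)
  · exact exists_isBlock_inl_mem_inr_mem h2 hχ x d
  · obtain ⟨b, hb, hy, hc⟩ := exists_isBlock_inl_mem_inr_mem h2 hχ y c
    exact ⟨b, hb, hc, hy⟩
  · have hcd : d = !c := by cases c <;> cases d <;> simp_all
    subst hcd
    exact ⟨_, .base, by cases c <;> simp, by cases c <;> simp⟩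

theorem isSteinerTripleSystem_isBlock [Fintype R] [DecidablePred (IsBlock χ)]
    (h2 : IsUnit (2 : R)) (h3 : IsUnit (3 : R)) (hχ : ∀ x, x ≠ 0 → χ (-2 * x) = !χ x) :
    IsSteinerTripleSystem univ (univ.filter (IsBlock χ)) := by
  refine ⟨fun b hb => ⟨subset_univ b, (mem_filter.1 hb).2.card_eq_three h3⟩,
    fun p _ q _ hpq => ?_⟩
  obtain ⟨b, hb, hp, hq⟩ := exists_isBlock_mem h2 hχ hpq
  refine ⟨b, ⟨mem_filter.2 ⟨mem_univ b, hb⟩, hp, hq⟩, fun b' ⟨hb', hp', hq'⟩ => ?_⟩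
  rw [(mem_filter.1 hb').2.eq_insert_thirdPoint h2 h3 hχ hp' hq' hpq,
    hb.eq_insert_thirdPoint h2 h3 hχ hp hq hpq]

end Construction

section Labels

def label (a : ℕ) : ZMod (2 * a + 1) ⊕ Bool → ℕ
  | inl x => if x.val < a then x.val else x.val + 2
  | inr c => a + c.toNat

variable {a : ℕ}

theorem label_inl_bounds (x : ZMod (2 * a + 1)) :
    x.val ≤ label a (inl x) ∧ label a (inl x) ≤ x.val + 2 := by
  simp only [label]; split_ifs <;> omega

theorem label_inr_bounds (c : Bool) : a ≤ label a (inr c) ∧ label a (inr c) ≤ a + 1 := by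
  cases c <;> simp [label]

theorem label_injective : Function.Injective (label a) := by
  rintro (x | c) (y | d) h <;> simp only [label] at h
  · congr 1; apply ZMod.val_injective; split_ifs at h <;> omega
  · split_ifs at h <;> cases d <;> simp at h <;> omega
  · split_ifs at h <;> cases c <;> simp at h <;> omega
  · congr 1; cases c <;> cases d <;> simp_all

theorem map_univ_label :
    (univ : Finset (ZMod (2 * a + 1) ⊕ Bool)).map ⟨label a, label_injective⟩ =
      range (2 * a + 3) := by
  refine eq_of_subset_of_card_le (fun m hm => ?_) (by simp [ZMod.card])
  obtain ⟨x | c, -, rfl⟩ := mem_map.1 hm <;> rw [mem_range]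
  · have := (label_inl_bounds x).2; have := ZMod.val_lt x; dsimp; omega
  · have := (label_inr_bounds (a := a) c).2; dsimp; omega

theorem sum_label_zeroSum {x y z : ZMod (2 * a + 1)} (hxy : x ≠ y) (h : x + y + z = 0) :
    2 * a + 1 ≤ label a (inl x) + label a (inl y) + label a (inl z) ∧
      label a (inl x) + label a (inl y) + label a (inl z) ≤ 4 * a + 8 := by
  have hdvd : 2 * a + 1 ∣ x.val + y.val + z.val := by
    rw [← ZMod.natCast_eq_zero_iff]; push_cast [ZMod.natCast_val, ZMod.cast_id]; exact h
  have hpos : 0 < x.val + y.val + z.val := by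
    by_contra! h0
    exact hxy (by rw [(ZMod.val_eq_zero x).1 (by omega), (ZMod.val_eq_zero y).1 (by omega)])
  have := Nat.le_and_le_two_mul_of_dvd hdvd hpos
    (by have := x.val_lt; have := y.val_lt; have := z.val_lt; omega)
  have := label_inl_bounds x; have := label_inl_bounds y; have := label_inl_bounds z
  omega

theorem sum_label_infinity (h2 : IsUnit (2 : ZMod (2 * a + 1))) {w : ZMod (2 * a + 1)}
    (hw : w ≠ 0) (c : Bool) :
    2 * a + 1 ≤ label a (inl w) + label a (inl (-2 * w)) + label a (inr c) ∧
      label a (inl w) + label a (inl (-2 * w)) + label a (inr c) ≤ 4 * a + 8 := by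
  have hdvd : 2 * a + 1 ∣ (-2 * w).val + 2 * w.val := by
    rw [← ZMod.natCast_eq_zero_iff]; push_cast [ZMod.natCast_val, ZMod.cast_id]; ring
  have hw0 : 0 < w.val := Nat.pos_of_ne_zero ((ZMod.val_ne_zero w).2 hw)
  have hw2 : 0 < (-2 * w).val :=
    Nat.pos_of_ne_zero ((ZMod.val_ne_zero _).2 fun h => hw (h2.neg.mul_right_eq_zero.1 h))
  have := (-2 * w).val_lt
  have := Nat.le_and_le_two_mul_of_dvd hdvd (by omega) (by have := w.val_lt; omega)
  have := label_inl_bounds w; have := label_inl_bounds (-2 * w)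
  have := label_inr_bounds (a := a) c
  omega

theorem IsBlock.sum_label_bounds (h2 : IsUnit (2 : ZMod (2 * a + 1)))
    (h3 : IsUnit (3 : ZMod (2 * a + 1))) {χ : ZMod (2 * a + 1) → Bool} {b}
    (hb : IsBlock χ b) : 2 * a + 1 ≤ ∑ p ∈ b, label a p ∧ ∑ p ∈ b, label a p ≤ 4 * a + 8 := by
  rcases hb with ⟨hxy, hxz, hyz, h⟩ | @⟨w, hw⟩ | _
  · rw [sum_insert (by simp [hxy, hxz]), sum_pair (by simpa using hyz), ← add_assoc]
    exact sum_label_zeroSum hxy h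
  · have : w ≠ -2 * w := fun h => hw (eq_zero_of_neg_two_mul_eq_self h3 h.symm)
    rw [sum_insert (by simpa using this), sum_pair (by simp), ← add_assoc]
    exact sum_label_infinity h2 hw _
  · rw [sum_insert (by simp), sum_pair (by simp)]
    simp only [label, ZMod.val_zero, Bool.toNat_false, Bool.toNat_true]
    split_ifs <;> omega

theorem exists_isSteinerTripleSystem_sum_bounds (h2 : IsUnit (2 : ZMod (2 * a + 1)))
    (h3 : IsUnit (3 : ZMod (2 * a + 1))) {χ : ZMod (2 * a + 1) → Bool}
    (hχ : ∀ x, x ≠ 0 → χ (-2 * x) = !χ x) :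
    ∃ B : Finset (Finset ℕ), IsSteinerTripleSystem (range (2 * a + 3)) B ∧
      ∀ b ∈ B, 2 * a + 1 ≤ b.sum id ∧ b.sum id ≤ 4 * a + 8 := by
  classical
  let e : ZMod (2 * a + 1) ⊕ Bool ↪ ℕ := ⟨label a, label_injective⟩
  refine ⟨(univ.filter (IsBlock χ)).image (·.map e),
    map_univ_label ▸ (isSteinerTripleSystem_isBlock h2 h3 hχ).map e, ?_⟩
  simp only [mem_image, mem_filter]
  rintro _ ⟨b, ⟨-, hb⟩, rfl⟩
  rw [sum_map]
  exact hb.sum_label_bounds h2 h3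

end Labels

end ZeroSumSteiner

open ZeroSumSteiner

/-- Suppose `v ≡ 1` or `3 (mod 6)` and for every prime `p` dividing `v−2` the
multiplicative order of `−2` modulo `p` is singly even.  Then there is a Steiner triple
system of order `v` on `{0,…,v−1}` all of whose blocks have element-sum at least `v−2`
and at most `2v+2`; in particular its DiffSum is at most `v+4`. -/
theorem stmt_13 (v : ℕ) (hv : v % 6 = 1 ∨ v % 6 = 3)
    (horder : ∀ p : ℕ, p.Prime → p ∣ v - 2 → orderOf (-2 : ZMod p) % 4 = 2) :
    ∃ B : Finset (Finset ℕ),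
      (∀ b ∈ B, b ⊆ Finset.range v ∧ b.card = 3) ∧
      (∀ x ∈ Finset.range v, ∀ y ∈ Finset.range v, x ≠ y →
        ∃! b, b ∈ B ∧ x ∈ b ∧ y ∈ b) ∧
      (∀ b ∈ B, v - 2 ≤ b.sum id ∧ b.sum id ≤ 2 * v + 2) ∧
      (∀ b1 ∈ B, ∀ b2 ∈ B, b1.sum id ≤ b2.sum id + (v + 4)) := by
  obtain rfl | ⟨a, rfl⟩ : v = 1 ∨ ∃ a, v = 2 * a + 3 := by
    rcases Nat.lt_or_ge v 3 with h | h
    · left; omega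
    · exact Or.inr ⟨(v - 3) / 2, by omega⟩
  · exact ⟨∅, by simp, fun x hx y hy hxy => by simp at hx hy; omega, by simp, by simp⟩
  have h2 : IsUnit (2 : ZMod (2 * a + 1)) := by
    exact_mod_cast (ZMod.isUnit_iff_coprime 2 _).2
      (Nat.prime_two.coprime_iff_not_dvd.2 (by omega))
  have h3 : IsUnit (3 : ZMod (2 * a + 1)) := by
    exact_mod_cast (ZMod.isUnit_iff_coprime 3 _).2
      (Nat.prime_three.coprime_iff_not_dvd.2 (by omega))
  obtain ⟨χ, hχ⟩ := ZMod.exists_bool_intCast_mul_eq_not (n := 2 * a + 1) (m := -2)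
    (by push_cast; exact h2.neg) fun p hp hpn => by
      have := horder p hp (by simpa using hpn)
      push_cast
      exact Nat.even_iff.2 (by omega)
  push_cast at hχ
  obtain ⟨B, ⟨hsub, huniq⟩, hsum⟩ := exists_isSteinerTripleSystem_sum_bounds h2 h3 hχ
  refine ⟨B, hsub, huniq, fun b hb => ?_, fun b1 hb1 b2 hb2 => ?_⟩
  · have := hsum b hb
    omega
  · have := hsum b1 hb1
    have := hsum b2 hb2
    omega
end

section
/- For every Steiner system S(t,k,v) D and every bijective point labeling rk: V → {0,...,v-1}, the minimum block sum is at most (v(k−t+1) + k(t−2))/2 and the maximum block sum is at least (v(k+t−1) − kt)/2; consequently the difference between maximum and minimum block sums is at least (v−k)(t−1). -/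
/-!
Let `S` be the `t - 1` points with the smallest labels. Each point outside `S` lies in exactly
one block through `S`, so these blocks cut `Sᶜ` into parts `b \ S` of the common size
`k - t + 1`, and the part of least label sum has at most the average label sum. This bounds the
minimum; the reversed labeling `i ↦ v - 1 - i` turns it into the bound on the maximum, and the
two bounds differ by `(v - k)(t - 1)`.
-/

open Finset

variable {α : Type*} {t k n : ℕ}

lemma sum_range_cast_mul_two {R : Type*} [CommRing R] (n : ℕ) :
    (∑ i ∈ range n, (i : R)) * 2 = n * (n - 1) := by
  rcases n with _ | n
  · simp
  · have := congrArg (Nat.cast (R := R)) (sum_range_id_mul_two (n + 1))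
    push_cast at this
    simpa using this

lemma sum_label_mul_two [Fintype α] {R : Type*} [CommRing R] (rk : α ≃ Fin n) :
    (∑ x, ((rk x : ℕ) : R)) * 2 = n * (n - 1) := by
  rw [Equiv.sum_comp rk (fun i => ((i : ℕ) : R)), Fin.sum_univ_eq_sum_range (fun i => (i : R)),
    sum_range_cast_mul_two]

lemma sum_filter_label_lt [Fintype α] {M : Type*} [AddCommMonoid M] (rk : α ≃ Fin n) {s : ℕ}
    (hs : s ≤ n) (g : ℕ → M) :
    ∑ x ∈ univ.filter (fun x => (rk x : ℕ) < s), g (rk x) = ∑ i ∈ range s, g i := by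
  refine sum_bij (fun x _ => rk x) ?_ ?_ ?_ (fun _ _ => rfl)
  · intro x hx
    simpa using hx
  · intro x _ y _ h
    exact rk.injective (Fin.ext h)
  · intro i hi
    rw [mem_range] at hi
    exact ⟨rk.symm ⟨i, by omega⟩, by simpa using hi, by simp⟩

variable [DecidableEq α] {B : Finset (Finset α)} {S : Finset α}

def blocksThrough (B : Finset (Finset α)) (S : Finset α) : Finset (Finset α) :=
  B.filter (S ⊆ ·)

lemma mem_blocksThrough {b : Finset α} : b ∈ blocksThrough B S ↔ b ∈ B ∧ S ⊆ b :=
  mem_filter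

lemma existsUnique_mem_blocksThrough
    (hsteiner : ∀ T : Finset α, #T = t → ∃! b, b ∈ B ∧ T ⊆ b) (hS : #S + 1 = t)
    {x : α} (hx : x ∉ S) : ∃! b, b ∈ blocksThrough B S ∧ x ∈ b := by
  have := hsteiner (insert x S) (by rw [card_insert_of_notMem hx, hS])
  simpa only [mem_blocksThrough, insert_subset_iff, and_assoc,
    and_comm (a := x ∈ _) (b := S ⊆ _)] using this

lemma pairwiseDisjoint_sdiff_blocksThrough
    (hsteiner : ∀ T : Finset α, #T = t → ∃! b, b ∈ B ∧ T ⊆ b) (hS : #S + 1 = t) :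
    (blocksThrough B S : Set (Finset α)).PairwiseDisjoint (· \ S) := by
  intro b₁ hb₁ b₂ hb₂ hne
  refine disjoint_left.2 fun x hx₁ hx₂ => hne ?_
  rw [mem_sdiff] at hx₁ hx₂
  exact (existsUnique_mem_blocksThrough hsteiner hS hx₁.2).unique ⟨hb₁, hx₁.1⟩ ⟨hb₂, hx₂.1⟩

lemma biUnion_sdiff_blocksThrough [Fintype α]
    (hsteiner : ∀ T : Finset α, #T = t → ∃! b, b ∈ B ∧ T ⊆ b) (hS : #S + 1 = t) :
    (blocksThrough B S).biUnion (· \ S) = Sᶜ := by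
  ext x
  simp only [mem_biUnion, mem_sdiff, mem_compl]
  refine ⟨fun ⟨_, _, _, hx⟩ => hx, fun hx => ?_⟩
  obtain ⟨b, ⟨hb, hxb⟩, -⟩ := existsUnique_mem_blocksThrough hsteiner hS hx
  exact ⟨b, hb, hxb, hx⟩

lemma exists_mem_blocksThrough_sum_sdiff_mul_card_le [Fintype α]
    {R : Type*} [CommSemiring R] [LinearOrder R] [IsOrderedRing R]
    (hcard : ∀ b ∈ B, #b = k)
    (hsteiner : ∀ T : Finset α, #T = t → ∃! b, b ∈ B ∧ T ⊆ b) (hS : #S + 1 = t)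
    (hSc : Sᶜ.Nonempty) (f : α → R) :
    ∃ b ∈ blocksThrough B S, (∑ x ∈ b \ S, f x) * #Sᶜ ≤ (∑ x ∈ Sᶜ, f x) * #(b \ S) := by
  set C := blocksThrough B S
  have hdisj := pairwiseDisjoint_sdiff_blocksThrough hsteiner hS
  have hunion := biUnion_sdiff_blocksThrough hsteiner hS
  have hC : C.Nonempty := by
    obtain ⟨x, hx⟩ := hSc
    obtain ⟨b, ⟨hb, -⟩, -⟩ := existsUnique_mem_blocksThrough hsteiner hS (mem_compl.1 hx)
    exact ⟨b, hb⟩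
  have hpart : ∀ b ∈ C, #(b \ S) = k - #S := fun b hb => by
    rw [mem_blocksThrough] at hb
    rw [card_sdiff_of_subset hb.2, hcard b hb.1]
  obtain ⟨b, hb, hmin⟩ := C.exists_min_image (fun b => ∑ x ∈ b \ S, f x) hC
  refine ⟨b, hb, ?_⟩
  have hcount : #Sᶜ = #C * #(b \ S) := by
    rw [← hunion, card_biUnion hdisj, sum_congr rfl hpart, sum_const, smul_eq_mul, hpart b hb]
  have hsum : #C • ∑ x ∈ b \ S, f x ≤ ∑ x ∈ Sᶜ, f x := by
    rw [← hunion, sum_biUnion hdisj]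
    exact card_nsmul_le_sum _ _ _ hmin
  rw [hcount, Nat.cast_mul, ← mul_assoc, mul_comm _ (#C : R), ← nsmul_eq_mul]
  exact mul_le_mul_of_nonneg_right hsum (Nat.cast_nonneg _)

theorem exists_block_sum_label_le [Fintype α] (ht : 1 ≤ t) (htn : t ≤ n)
    (hcard : ∀ b ∈ B, #b = k)
    (hsteiner : ∀ T : Finset α, #T = t → ∃! b, b ∈ B ∧ T ⊆ b) (rk : α ≃ Fin n) :
    ∃ b ∈ B, ∑ x ∈ b, ((rk x : ℕ) : ℚ)
      ≤ ((n : ℚ) * ((k : ℚ) - t + 1) + (k : ℚ) * ((t : ℚ) - 2)) / 2 := by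
  obtain ⟨s, rfl⟩ : ∃ s, t = s + 1 := ⟨t - 1, by omega⟩
  have hsn : s < n := by omega
  set f : α → ℚ := fun x => ((rk x : ℕ) : ℚ)
  set S := univ.filter (fun x => (rk x : ℕ) < s)
  have hS : #S = s := by
    have := sum_filter_label_lt rk hsn.le (fun _ => (1 : ℕ))
    rw [sum_const, sum_const, card_range, smul_eq_mul, smul_eq_mul, mul_one, mul_one] at this
    exact this
  have hSc : #Sᶜ = n - s := by rw [card_compl, hS, Fintype.card_congr rk, Fintype.card_fin]
  obtain ⟨b, hb, hle⟩ := exists_mem_blocksThrough_sum_sdiff_mul_card_le hcard hsteiner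
    (by rw [hS]) (card_pos.1 (by omega)) f
  rw [mem_blocksThrough] at hb
  have hsk : s ≤ k := hS ▸ hcard b hb.1 ▸ card_le_card hb.2
  have hbS : #(b \ S) = k - s := by rw [card_sdiff_of_subset hb.2, hcard b hb.1, hS]
  have hSsum : (∑ x ∈ S, f x) * 2 = s * (s - 1) := by
    rw [sum_filter_label_lt rk hsn.le (fun i => (i : ℚ)), sum_range_cast_mul_two]
  have hSc_sum : (∑ x ∈ Sᶜ, f x) * 2 = (n - s) * (n + s - 1) := by
    have htotal : (∑ x, f x) * 2 = n * (n - 1) := sum_label_mul_two rk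
    linear_combination htotal - hSsum + 2 * sum_add_sum_compl S f
  rw [hSc, hbS, Nat.cast_sub hsn.le, Nat.cast_sub hsk] at hle
  have hpart : (∑ x ∈ b \ S, f x) * 2 ≤ (n + s - 1) * (k - s) := by
    refine le_of_mul_le_mul_right ?_ (sub_pos.2 (Nat.cast_lt.2 hsn) : (0 : ℚ) < n - s)
    linear_combination 2 * hle + (k - s) * hSc_sum
  refine ⟨b, hb.1, ?_⟩
  push_cast
  linear_combination (hpart + hSsum - 2 * sum_sdiff hb.2 (f := f)) / 2

theorem exists_block_sum_label_ge [Fintype α] (ht : 1 ≤ t) (htn : t ≤ n)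
    (hcard : ∀ b ∈ B, #b = k)
    (hsteiner : ∀ T : Finset α, #T = t → ∃! b, b ∈ B ∧ T ⊆ b) (rk : α ≃ Fin n) :
    ∃ b ∈ B, ((n : ℚ) * ((k : ℚ) + t - 1) - (k : ℚ) * t) / 2
      ≤ ∑ x ∈ b, ((rk x : ℕ) : ℚ) := by
  obtain ⟨b, hb, hle⟩ := exists_block_sum_label_le ht htn hcard hsteiner (rk.trans Fin.revPerm)
  refine ⟨b, hb, ?_⟩
  have hrev : ∑ x ∈ b, (((rk.trans Fin.revPerm) x : ℕ) : ℚ)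
      = k * (n - 1) - ∑ x ∈ b, ((rk x : ℕ) : ℚ) := by
    simp only [Equiv.trans_apply, Fin.revPerm_apply, Fin.val_rev,
      Nat.cast_sub (Nat.succ_le_of_lt (rk _).isLt), Nat.cast_succ, sum_sub_distrib,
      sum_add_distrib, sum_const, hcard b hb, nsmul_eq_mul]
    ring
  linarith

/-- For every Steiner system `S(t,k,v)` and every bijective point labeling by
`{0,…,v-1}`, the minimum block sum is at most `(v(k−t+1) + k(t−2))/2` and the maximum
block sum is at least `(v(k+t−1) − kt)/2`; consequently the difference between maximum
and minimum block sums is at least `(v−k)(t−1)`. -/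
theorem stmt_15 (v k t : ℕ) (ht : 2 ≤ t) (htk : t < k) (hkv : k < v)
    (B : Finset (Finset (Fin v)))
    (hcard : ∀ b ∈ B, b.card = k)
    (hsteiner : ∀ T : Finset (Fin v), T.card = t → ∃! b, b ∈ B ∧ T ⊆ b)
    (rk : Fin v ≃ Fin v) :
    (∃ b ∈ B, (∑ x ∈ b, ((rk x : ℕ) : ℚ))
        ≤ ((v : ℚ) * ((k : ℚ) - t + 1) + (k : ℚ) * ((t : ℚ) - 2)) / 2) ∧
    (∃ b ∈ B, ((v : ℚ) * ((k : ℚ) + t - 1) - (k : ℚ) * t) / 2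
        ≤ ∑ x ∈ b, ((rk x : ℕ) : ℚ)) ∧
    (∃ b1 ∈ B, ∃ b2 ∈ B,
      ((v : ℚ) - k) * ((t : ℚ) - 1)
        ≤ (∑ x ∈ b1, ((rk x : ℕ) : ℚ)) - ∑ x ∈ b2, ((rk x : ℕ) : ℚ)) := by
  obtain ⟨b₁, hb₁, hmin⟩ := exists_block_sum_label_le (by omega) (by omega) hcard hsteiner rk
  obtain ⟨b₂, hb₂, hmax⟩ := exists_block_sum_label_ge (by omega) (by omega) hcard hsteiner rk
  refine ⟨⟨b₁, hb₁, hmin⟩, ⟨b₂, hb₂, hmax⟩, b₂, hb₂, b₁, hb₁, ?_⟩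
  linarith
end

section
/- Let t ≥ 2 and v > C(t+2,2) + C(t+1,2) with gcd(v,t+1)=1. Then there exists a t-(v,t+1,1) packing on {0,...,v-1} with exactly C(v,t+1)/v blocks whose MinSum (the minimum element-sum over its blocks) equals v + C(t+1,2) − 1; that is, every block has element-sum at least v + C(t+1,2) − 1, and this value is attained. -/
open Finset

lemma aux_two_mul_choose_two (n : ℕ) : 2 * ((n+1).choose 2) = (n+1) * n := by
  induction n with
  | zero => simp
  | succ n ih =>
    rw [show n+1+1 = (n+1)+1 from rfl, Nat.choose_succ_succ (n+1) 1, Nat.mul_add, ih,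
      Nat.choose_one_right]
    ring

lemma aux_sum_ge (s : Finset ℕ) : s.card.choose 2 ≤ s.sum id := by
  induction s using Finset.strongInduction with
  | _ s ih =>
    rcases s.eq_empty_or_nonempty with rfl | hne
    · simp
    · have hmem := s.max'_mem hne
      set m := s.max' hne with hm
      have hsub : s ⊆ range (m+1) := fun x hx => mem_range.2 (Nat.lt_succ_of_le (le_max' s x hx))
      have hcard : s.card ≤ m + 1 := by simpa using card_le_card hsub
      have h1 : (s.erase m).card = s.card - 1 := card_erase_of_mem hmem
      have h2 := ih (s.erase m) (erase_ssubset hmem)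
      have hsum : s.sum id = m + (s.erase m).sum id := (Finset.add_sum_erase s id hmem).symm
      obtain ⟨n, hn⟩ : ∃ n, s.card = n + 1 :=
        ⟨s.card - 1, (Nat.succ_pred_eq_of_pos (card_pos.2 hne)).symm⟩
      rw [hsum, hn, Nat.choose_succ_succ n 1, Nat.choose_one_right]
      rw [hn] at h1 hcard
      simp only [Nat.add_sub_cancel] at h1
      rw [h1] at h2
      have hch : n.choose (Nat.succ 1) = n.choose 2 := rfl
      rw [hch]
      omega

lemma aux_fiber_le (v k c c' g : ℕ) (hv : 0 < v) (hc : c < v)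
    (hg : (c + k * g) % v = c') :
    (((range v).powersetCard k).filter (fun b => b.sum id % v = c)).card ≤
    (((range v).powersetCard k).filter (fun b => b.sum id % v = c')).card := by
  have hinj : ∀ x < v, ∀ y < v, (x + g) % v = (y + g) % v → x = y := by
    intro x hx y hy h
    have h2 : x ≡ y [MOD v] := Nat.ModEq.add_right_cancel' g h
    have h3 : x % v = y % v := h2
    rwa [Nat.mod_eq_of_lt hx, Nat.mod_eq_of_lt hy] at h3
  apply Finset.card_le_card_of_injOn (fun b => b.image (fun x => (x + g) % v))
  · intro b hb
    simp only [mem_coe, mem_filter, mem_powersetCard] at hb ⊢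
    obtain ⟨⟨hbs, hbc⟩, hbm⟩ := hb
    have hinjb : Set.InjOn (fun x => (x + g) % v) b := by
      intro x hx y hy h
      exact hinj x (mem_range.1 (hbs hx)) y (mem_range.1 (hbs hy)) h
    refine ⟨⟨?_, ?_⟩, ?_⟩
    · intro y hy
      obtain ⟨x, hx, rfl⟩ := mem_image.1 hy
      exact mem_range.2 (Nat.mod_lt _ hv)
    · rw [Finset.card_image_of_injOn hinjb, hbc]
    · rw [Finset.sum_image hinjb]
      simp only [id]
      rw [← Finset.sum_nat_mod, Finset.sum_add_distrib, Finset.sum_const, hbc, smul_eq_mul]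
      have hbm' : (∑ x ∈ b, x) % v = c := hbm
      rw [Nat.add_mod, hbm']
      rw [Nat.add_mod c (k*g), Nat.mod_eq_of_lt hc] at hg
      exact hg
  · intro b1 hb1 b2 hb2 h
    simp only [mem_coe, mem_filter, mem_powersetCard] at hb1 hb2
    ext x
    constructor
    · intro hx
      have : (x + g) % v ∈ b2.image (fun x => (x + g) % v) := by
        rw [show image (fun x => (x + g) % v) b2 = _ from h.symm]; exact mem_image_of_mem _ hx
      obtain ⟨y, hy, hxy⟩ := mem_image.1 this
      have := hinj y (mem_range.1 (hb2.1.1 hy)) x (mem_range.1 (hb1.1.1 hx)) hxy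
      rwa [this] at hy
    · intro hx
      have : (x + g) % v ∈ b1.image (fun x => (x + g) % v) := by
        rw [show image (fun x => (x + g) % v) b1 = _ from h]; exact mem_image_of_mem _ hx
      obtain ⟨y, hy, hxy⟩ := mem_image.1 this
      have := hinj y (mem_range.1 (hb1.1.1 hy)) x (mem_range.1 (hb2.1.1 hx)) hxy
      rwa [this] at hy

lemma aux_exists_g (v k c c' : ℕ) (hv : 0 < v) (hcop : Nat.Coprime k v) (hc' : c' < v) :
    ∃ g, (c + k * g) % v = c' := by
  haveI : NeZero v := ⟨hv.ne'⟩
  have hunit : IsUnit ((k : ℕ) : ZMod v) := (ZMod.isUnit_iff_coprime k v).2 hcop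
  obtain ⟨u, hu⟩ := hunit
  refine ⟨((↑u⁻¹ : ZMod v) * ((c' : ZMod v) - c)).val, ?_⟩
  have hcast : ((c + k * ((↑u⁻¹ : ZMod v) * ((c' : ZMod v) - c)).val : ℕ) : ZMod v)
      = (c' : ZMod v) := by
    push_cast
    rw [ZMod.natCast_val, ZMod.cast_id, ← hu, ← mul_assoc]
    rw [show (u : ZMod v) * ↑u⁻¹ = 1 from u.mul_inv]
    ring
  have := (ZMod.natCast_eq_natCast_iff _ _ _).1 hcast
  have h2 : (c + k * ((↑u⁻¹ : ZMod v) * ((c' : ZMod v) - c)).val) % v = c' % v := this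
  rwa [Nat.mod_eq_of_lt hc'] at h2

/-- Let `t ≥ 2`, `v > C(t+2,2) + C(t+1,2)` with `gcd(v,t+1) = 1`.  Then there is a
`t`-`(v,t+1,1)` packing on `{0,…,v-1}` with exactly `C(v,t+1)/v` blocks whose minimum
block sum equals `v + C(t+1,2) − 1` (every block has element-sum at least
`v + C(t+1,2) − 1`, and this value is achieved). -/
theorem stmt_19 (v t : ℕ) (ht : 2 ≤ t)
    (hv : (t + 2).choose 2 + (t + 1).choose 2 < v)
    (hgcd : Nat.gcd v (t + 1) = 1) :
    ∃ D : Finset (Finset ℕ),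
      (∀ b ∈ D, b ⊆ Finset.range v ∧ b.card = t + 1) ∧
      (∀ T : Finset ℕ, T.card = t → ∀ b1 ∈ D, ∀ b2 ∈ D, T ⊆ b1 → T ⊆ b2 → b1 = b2) ∧
      D.card = v.choose (t + 1) / v ∧
      (∀ b ∈ D, v + (t + 1).choose 2 - 1 ≤ b.sum id) ∧
      (∃ b ∈ D, b.sum id = v + (t + 1).choose 2 - 1) := by
  have h2c1 : 2 * ((t+1).choose 2) = (t+1) * t := aux_two_mul_choose_two t
  have h2c2 : 2 * ((t+2).choose 2) = (t+2) * (t+1) := aux_two_mul_choose_two (t+1)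
  have hkey : (t+2)*(t+1) + (t+1)*t = 2*((t+1)*(t+1)) := by ring
  have hv2 : (t+1)*(t+1) < v := by linarith
  have h6 : 6 ≤ (t+1)*t := by nlinarith
  have hchoose_ge : 3 ≤ (t+1).choose 2 := by omega
  have hchoose_lt : (t+1).choose 2 < v := by omega
  have h2t : 2*t + 1 ≤ (t+1)*(t+1) := by nlinarith
  have h2tv : 2*t + 1 < v := by omega
  have hvpos : 0 < v := by omega
  set c0 := (t+1).choose 2 - 1 with hc0def
  have hc0lt : c0 < v := by omega
  set D := ((range v).powersetCard (t+1)).filter (fun b => b.sum id % v = c0) with hD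
  have hmemD : ∀ b, b ∈ D ↔ (b ⊆ range v ∧ b.card = t+1) ∧ b.sum id % v = c0 := by
    intro b
    simp [hD, mem_filter, mem_powersetCard]
  refine ⟨D, ?_, ?_, ?_, ?_, ?_⟩
  · intro b hb
    exact ((hmemD b).1 hb).1
  · -- packing property
    intro T hT b1 hb1 b2 hb2 hT1 hT2
    rw [hmemD] at hb1 hb2
    have hcd1 : (b1 \ T).card = 1 := by rw [card_sdiff_of_subset hT1]; omega
    have hcd2 : (b2 \ T).card = 1 := by rw [card_sdiff_of_subset hT2]; omega
    obtain ⟨x1, hx1⟩ := card_eq_one.1 hcd1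
    obtain ⟨x2, hx2⟩ := card_eq_one.1 hcd2
    have hx1T : x1 ∉ T := by
      have : x1 ∈ b1 \ T := hx1 ▸ mem_singleton_self x1
      exact (mem_sdiff.1 this).2
    have hx2T : x2 ∉ T := by
      have : x2 ∈ b2 \ T := hx2 ▸ mem_singleton_self x2
      exact (mem_sdiff.1 this).2
    have hb1e : b1 = insert x1 T := by
      rw [← sdiff_union_of_subset hT1, hx1, ← Finset.insert_eq]
    have hb2e : b2 = insert x2 T := by
      rw [← sdiff_union_of_subset hT2, hx2, ← Finset.insert_eq]
    have hs1 : b1.sum id = x1 + T.sum id := by rw [hb1e, sum_insert hx1T]; rfl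
    have hs2 : b2.sum id = x2 + T.sum id := by rw [hb2e, sum_insert hx2T]; rfl
    have hm1 := hb1.2
    have hm2 := hb2.2
    rw [hs1] at hm1
    rw [hs2] at hm2
    have hmeq : (x1 + T.sum id) % v = (x2 + T.sum id) % v := by rw [hm1, hm2]
    have hx12 : x1 ≡ x2 [MOD v] := Nat.ModEq.add_right_cancel' (T.sum id) hmeq
    have hx1v : x1 < v := mem_range.1 (hb1.1.1 (hb1e ▸ mem_insert_self x1 T))
    have hx2v : x2 < v := mem_range.1 (hb2.1.1 (hb2e ▸ mem_insert_self x2 T))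
    have hx1eq : x1 = x2 := by
      have h3 : x1 % v = x2 % v := hx12
      rwa [Nat.mod_eq_of_lt hx1v, Nat.mod_eq_of_lt hx2v] at h3
    rw [hb1e, hb2e, hx1eq]
  · -- cardinality
    have hcop : Nat.Coprime (t+1) v := (Nat.coprime_comm.mp hgcd)
    have heq : ∀ c' ∈ range v,
        (((range v).powersetCard (t+1)).filter (fun b => b.sum id % v = c')).card = D.card := by
      intro c' hc'
      have hc'v := mem_range.1 hc'
      obtain ⟨g1, hg1⟩ := aux_exists_g v (t+1) c' c0 hvpos hcop hc0lt
      obtain ⟨g2, hg2⟩ := aux_exists_g v (t+1) c0 c' hvpos hcop hc'v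
      exact le_antisymm (aux_fiber_le v (t+1) c' c0 g1 hvpos hc'v hg1)
        (aux_fiber_le v (t+1) c0 c' g2 hvpos hc0lt hg2)
    have hpart : ((range v).powersetCard (t+1)).card =
        ∑ c' ∈ range v, (((range v).powersetCard (t+1)).filter
          (fun b => b.sum id % v = c')).card :=
      Finset.card_eq_sum_card_fiberwise (fun b _ => mem_range.2 (Nat.mod_lt _ hvpos))
    rw [Finset.card_powersetCard, Finset.card_range, Finset.sum_congr rfl heq,
      Finset.sum_const, Finset.card_range, smul_eq_mul] at hpart
    rw [hpart, Nat.mul_div_cancel_left _ hvpos]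
  · -- lower bound on sums
    intro b hb
    rw [hmemD] at hb
    have hge := aux_sum_ge b
    rw [hb.1.2] at hge
    have hmod := hb.2
    obtain ⟨q, hq⟩ : ∃ q, b.sum id = v * q + c0 :=
      ⟨b.sum id / v, by rw [← hmod]; exact (Nat.div_add_mod _ _).symm⟩
    rcases Nat.eq_zero_or_pos q with rfl | hqpos
    · omega
    · have hvq : v ≤ v * q := Nat.le_mul_of_pos_right v hqpos
      omega
  · -- the witness block
    obtain ⟨a, rfl⟩ : ∃ a, t = a + 2 := ⟨t - 2, by omega⟩
    set b0 : Finset ℕ := insert (v-1) (insert (2*a+3) (range (a+1))) with hb0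
    have hnm1 : (2*a+3) ∉ range (a+1) := by simp [mem_range]; omega
    have hnm2 : (v-1) ∉ insert (2*a+3) (range (a+1)) := by
      simp [mem_insert, mem_range]; omega
    have hcard : b0.card = (a+2) + 1 := by
      rw [hb0, card_insert_of_notMem hnm2, card_insert_of_notMem hnm1, card_range]
    have hsub : b0 ⊆ range v := by
      intro x hx
      rw [hb0] at hx
      simp only [mem_insert, mem_range] at hx ⊢
      rcases hx with rfl | rfl | h <;> omega
    have hS2 : (∑ i ∈ range (a+1), i) * 2 = (a+1) * a := by
      rw [Finset.sum_range_id_mul_two]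
      norm_num
    have hCeq : (a+2+1).choose 2 = (∑ i ∈ range (a+1), i) + 2*a + 3 := by
      have h1 : 2 * ((a+3).choose 2) = (a+3) * (a+2) := aux_two_mul_choose_two (a+2)
      have h2 : (a+3)*(a+2) = (a+1)*a + 4*a + 6 := by ring
      have h3 : (a+2+1).choose 2 = (a+3).choose 2 := by norm_num
      rw [h3]
      omega
    have hsum0 : b0.sum id = v + (a+2+1).choose 2 - 1 := by
      rw [hb0, sum_insert hnm2, sum_insert hnm1]
      have hrs : (range (a+1)).sum id = ∑ i ∈ range (a+1), i := rfl
      simp only [id]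
      rw [hrs] at *
      omega
    have hmem : b0 ∈ D := by
      rw [hmemD]
      refine ⟨⟨hsub, hcard⟩, ?_⟩
      rw [hsum0]
      have h1 : v + (a+2+1).choose 2 - 1 = v + c0 := by omega
      rw [h1, Nat.add_mod_left, Nat.mod_eq_of_lt hc0lt]
    exact ⟨b0, hmem, hsum0⟩
end
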